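/- arXiv:2107.14739 — 9 statements merged into one kernel-verified Lean document; each statement's English description precedes it below -/
import Mathlib

section
/- Let q be a polynomial in ℝ[x₁,x₂,x₃] and set p = (x₁+x₂+x₃)·q. If every coefficient of p is nonnegative, then the rank ρ(p) satisfies ρ(p) = 0, or ρ(p) = 3, or ρ(p) ≥ 5. -/
namespace SOS3

open Polynomial

lemma coeff_term (c : ℝ) (k a n : ℕ) :
    (Polynomial.C c * (1+X)^k * X^a).coeff n =
      if a ≤ n then c * (k.choose (n-a) : ℝ) else 0 := by
  rw [coeff_mul_X_pow', coeff_C_mul, coeff_one_add_X_pow]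

lemma coeff_single (c : ℝ) (a n : ℕ) :
    (Polynomial.C c * X^a).coeff n = if a = n then c else 0 := by
  rw [coeff_C_mul, coeff_X_pow]
  rcases eq_or_ne a n with h | h
  · simp [h]
  · simp only [if_neg h, if_neg (fun hh : n = a => h hh.symm), mul_zero]

lemma if_term_nonneg {c : ℝ} (hc : 0 ≤ c) (k a n : ℕ) :
    0 ≤ (if a ≤ n then c * (k.choose (n-a) : ℝ) else 0) := by
  split
  · positivity
  · exact le_refl 0

lemma if_term_pos {c : ℝ} (hc : 0 < c) {k a n : ℕ} (h1 : a ≤ n) (h2 : n ≤ a + k) :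
    0 < (if a ≤ n then c * (k.choose (n-a) : ℝ) else 0) := by
  rw [if_pos h1]
  have h3 : 0 < (k.choose (n-a)) := Nat.choose_pos (by omega)
  positivity

lemma if_single_nonneg {c : ℝ} (hc : 0 ≤ c) (a n : ℕ) :
    0 ≤ (if a = n then c else 0) := by
  split
  · exact hc
  · exact le_refl 0

-- interval bound from positivity of a single `if` term
lemma bounds_of_if_term {c : ℝ} (hc : 0 < c) {k a n : ℕ}
    (h : 0 < (if a ≤ n then c * (k.choose (n-a) : ℝ) else 0)) :
    a ≤ n ∧ n ≤ a + k := by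
  by_contra hcon
  rcases le_or_gt a n with h1 | h1
  · have h2 : k < n - a := by omega
    rw [if_pos h1, Nat.choose_eq_zero_of_lt h2] at h
    simp at h
  · rw [if_neg (by omega)] at h
    exact lt_irrefl 0 h

lemma caseC_T3 (a₁ a₂ a₃ a₄ k₄ : ℕ) (c₁ c₂ c₃ c₄ : ℝ)
    (h1 : 0 < c₁) (h2 : 0 < c₂) (h3 : 0 < c₃) (h4 : 0 < c₄)
    (h12 : a₁ ≠ a₂) (h13 : a₁ ≠ a₃) (h23 : a₂ ≠ a₃) (hk : k₄ % 2 = 1)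
    (hrel : Polynomial.C c₁ * X^a₁ + Polynomial.C c₂ * X^a₂ + Polynomial.C c₃ * X^a₃ =
      Polynomial.C c₄*(1+X)^k₄*X^a₄) : False := by
  have key : ∀ n : ℕ, a₄ ≤ n → n ≤ a₄ + k₄ → (a₁ = n ∨ a₂ = n ∨ a₃ = n) := by
    intro n u v
    have hc := congrArg (fun f => Polynomial.coeff f n) hrel
    simp only [coeff_add, coeff_term, coeff_single] at hc
    by_contra hcon
    push_neg at hcon
    rw [if_neg hcon.1, if_neg hcon.2.1, if_neg hcon.2.2, add_zero, add_zero] at hc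
    have := if_term_pos h4 u v
    linarith
  have bnd : ∀ m : ℕ, (a₁ = m ∨ a₂ = m ∨ a₃ = m) → (a₄ ≤ m ∧ m ≤ a₄ + k₄) := by
    intro m hm
    have hc := congrArg (fun f => Polynomial.coeff f m) hrel
    simp only [coeff_add, coeff_term, coeff_single] at hc
    apply bounds_of_if_term h4
    rw [← hc]
    have n1 := if_single_nonneg h1.le a₁ m
    have n2 := if_single_nonneg h2.le a₂ m
    have n3 := if_single_nonneg h3.le a₃ m
    rcases hm with hm | hm | hm
    · rw [if_pos hm]; linarith
    · rw [if_pos hm]; linarith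
    · rw [if_pos hm]; linarith
  have b1 := bnd a₁ (Or.inl rfl)
  have b2 := bnd a₂ (Or.inr (Or.inl rfl))
  have b3 := bnd a₃ (Or.inr (Or.inr rfl))
  rcases eq_or_ne k₄ 1 with hk1 | hk1
  · omega
  · have hk3 : 3 ≤ k₄ := by omega
    have m1 := key a₄ (by omega) (by omega)
    have m2 := key (a₄+1) (by omega) (by omega)
    have m3 := key (a₄+2) (by omega) (by omega)
    have m4 := key (a₄+k₄) (by omega) (by omega)
    omega

lemma eval_neg_one_term (r : ℝ) (k a : ℕ) (hk : k ≠ 0) :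
    Polynomial.eval (-1 : ℝ) (Polynomial.C r * (1+X)^k * X^a) = 0 := by
  simp [zero_pow hk]

lemma eval_neg_one_single (r : ℝ) (a : ℕ) :
    Polynomial.eval (-1 : ℝ) (Polynomial.C r * X^a) = r * (-1)^a := by
  simp

lemma eval_neg_one_deriv_term (r : ℝ) (k a : ℕ) (hk : 2 ≤ k) :
    Polynomial.eval (-1 : ℝ) (derivative (Polynomial.C r * (1+X)^k * X^a)) = 0 := by
  rw [derivative_mul, derivative_mul]
  simp [derivative_pow, zero_pow (by omega : k ≠ 0), zero_pow (by omega : k - 1 ≠ 0)]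

lemma eval_neg_one_deriv_single (r : ℝ) (a : ℕ) :
    Polynomial.eval (-1 : ℝ) (derivative (Polynomial.C r * X^a)) = r * a * (-1)^(a-1) := by
  rw [derivative_C_mul, derivative_X_pow]
  simp [mul_assoc]

lemma hd_pow (a : ℕ) : (a:ℝ) * (-1:ℝ)^(a-1) = -((a:ℝ) * (-1)^a) := by
  cases a with
  | zero => simp
  | succ n => rw [Nat.add_sub_cancel, pow_succ]; push_cast; ring

lemma caseB (a₁ a₂ a₃ a₄ k₃ k₄ : ℕ) (c₁ c₂ c₃ c₄ : ℝ)
    (h1 : 0 < c₁) (h2 : 0 < c₂) (h3 : 0 < c₃) (h4 : 0 < c₄)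
    (ha : a₁ ≠ a₂) (hk3 : 1 ≤ k₃) (hk4 : 1 ≤ k₄) (hd : ¬(a₃ = a₄ ∧ k₃ = k₄))
    (hrel : Polynomial.C c₁ * X^a₁ + Polynomial.C c₂ * X^a₂ =
      Polynomial.C c₃*(1+X)^k₃*X^a₃ + Polynomial.C c₄*(1+X)^k₄*X^a₄) : False := by
  have key : ∀ n : ℕ, ((a₃ ≤ n ∧ n ≤ a₃ + k₃) ∨ (a₄ ≤ n ∧ n ≤ a₄ + k₄)) →
      (a₁ = n ∨ a₂ = n) := by
    intro n hn
    have hc := congrArg (fun f => Polynomial.coeff f n) hrel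
    simp only [coeff_add, coeff_term, coeff_single] at hc
    by_contra hcon
    push_neg at hcon
    rw [if_neg hcon.1, if_neg hcon.2, add_zero] at hc
    rcases hn with ⟨u, v⟩ | ⟨u, v⟩
    · have := if_term_pos h3 u v
      have := if_term_nonneg h4.le k₄ a₄ n
      linarith
    · have := if_term_pos h4 u v
      have := if_term_nonneg h3.le k₃ a₃ n
      linarith
  have m1 := key a₃ (by omega)
  have m2 := key (a₃+1) (by omega)
  have m3 := key (a₃+k₃) (by omega)
  have m4 := key a₄ (by omega)
  have m5 := key (a₄+1) (by omega)
  have m6 := key (a₄+k₄) (by omega)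
  omega

lemma caseC_T2 (a₁ a₂ a₃ a₄ k₃ k₄ : ℕ) (c₁ c₂ c₃ c₄ : ℝ)
    (h1 : 0 < c₁) (h2 : 0 < c₂) (h3 : 0 < c₃) (h4 : 0 < c₄)
    (h12 : a₁ ≠ a₂) (hk3 : 2 ≤ k₃) (hk4 : 1 ≤ k₄)
    (hrel : Polynomial.C c₁ * X^a₁ + Polynomial.C c₂ * X^a₂ +
        Polynomial.C c₃ * (1+X)^k₃ * X^a₃ =
      Polynomial.C c₄*(1+X)^k₄*X^a₄) : False := by
  rcases eq_or_ne k₄ 1 with hk1 | hk1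
  · -- support of RHS is {a₄, a₄+1}; LHS has ≥ 3 points from the k₃-interval
    subst hk1
    have key : ∀ n : ℕ, a₃ ≤ n → n ≤ a₃ + k₃ → (a₄ ≤ n ∧ n ≤ a₄ + 1) := by
      intro n u v
      have hc := congrArg (fun f => Polynomial.coeff f n) hrel
      simp only [coeff_add, coeff_term, coeff_single] at hc
      apply bounds_of_if_term h4
      rw [← hc]
      have n1 := if_single_nonneg h1.le a₁ n
      have n2 := if_single_nonneg h2.le a₂ n
      have n3 := if_term_pos h3 u v
      linarith
    have m1 := key a₃ (by omega) (by omega)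
    have m2 := key (a₃+1) (by omega) (by omega)
    have m3 := key (a₃+2) (by omega) (by omega)
    omega
  · have hk4' : 2 ≤ k₄ := by omega
    have e1 := congrArg (Polynomial.eval (-1 : ℝ)) hrel
    rw [eval_add, eval_add, eval_neg_one_single, eval_neg_one_single,
      eval_neg_one_term c₃ k₃ a₃ (by omega), eval_neg_one_term c₄ k₄ a₄ (by omega),
      add_zero] at e1
    have e2 := congrArg (Polynomial.eval (-1 : ℝ)) (congrArg derivative hrel)
    rw [derivative_add, derivative_add, eval_add, eval_add,
      eval_neg_one_deriv_single, eval_neg_one_deriv_single,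
      eval_neg_one_deriv_term c₃ k₃ a₃ hk3, eval_neg_one_deriv_term c₄ k₄ a₄ hk4',
      add_zero] at e2
    rw [mul_assoc, mul_assoc, hd_pow a₁, hd_pow a₂] at e2
    -- e1 : c₁ * (-1)^a₁ + c₂ * (-1)^a₂ = 0
    -- e2 : c₁ * -(a₁ * (-1)^a₁) + c₂ * -(a₂ * (-1)^a₂) = 0
    have hne : a₁ < a₂ ∨ a₂ < a₁ := by omega
    rcases Nat.even_or_odd a₁ with p1 | p1 <;> rcases Nat.even_or_odd a₂ with p2 | p2 <;>
      simp only [p1.neg_one_pow, p2.neg_one_pow, Even.neg_one_pow, Odd.neg_one_pow] at e1 e2 <;>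
      [skip; skip; skip; skip] <;>
      rcases hne with hlt | hlt <;>
      have hcast : (a₁:ℝ) < a₂ ∨ (a₂:ℝ) < a₁ := by
        first
        | exact Or.inl (by exact_mod_cast hlt)
        | exact Or.inr (by exact_mod_cast hlt)
    all_goals rcases hcast with hc' | hc' <;> nlinarith [h1, h2, e1, e2]

lemma eval_one_term (r : ℝ) (k a : ℕ) :
    Polynomial.eval (1 : ℝ) (Polynomial.C r * (1+X)^k * X^a) = r * 2^k := by
  simp; norm_num

lemma eval_contra (a₁ a₂ a₃ a₄ k₂ k₃ k₄ : ℕ) (c₁ r₂ r₃ r₄ : ℝ) (h1 : c₁ ≠ 0)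
    (h2 : k₂ ≠ 0) (h3 : k₃ ≠ 0) (h4 : k₄ ≠ 0)
    (hrel : Polynomial.C c₁ * X^a₁ + Polynomial.C r₂ * (1+X)^k₂ * X^a₂ +
      Polynomial.C r₃ * (1+X)^k₃ * X^a₃ + Polynomial.C r₄ * (1+X)^k₄ * X^a₄ = 0) : False := by
  have e := congrArg (Polynomial.eval (-1:ℝ)) hrel
  rw [eval_add, eval_add, eval_add, eval_neg_one_single,
    eval_neg_one_term _ _ _ h2, eval_neg_one_term _ _ _ h3, eval_neg_one_term _ _ _ h4,
    add_zero, add_zero, add_zero, eval_zero] at e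
  rcases mul_eq_zero.mp e with h | h
  · exact h1 h
  · exact pow_ne_zero a₁ (neg_ne_zero.mpr one_ne_zero) h

lemma eval_one_contra (a₁ a₂ a₃ a₄ k₂ k₃ k₄ : ℕ) (c₁ c₂ c₃ c₄ : ℝ)
    (h1 : 0 < c₁) (h2 : 0 < c₂) (h3 : 0 < c₃) (h4 : 0 < c₄)
    (hrel : Polynomial.C c₁ * X^a₁ + Polynomial.C c₂ * (1+X)^k₂ * X^a₂ +
      Polynomial.C c₃ * (1+X)^k₃ * X^a₃ + Polynomial.C c₄ * (1+X)^k₄ * X^a₄ = 0) : False := by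
  have e := congrArg (Polynomial.eval (1:ℝ)) hrel
  rw [eval_add, eval_add, eval_add, eval_one_term, eval_one_term, eval_one_term, eval_zero] at e
  simp only [eval_mul, eval_C, eval_pow, eval_X, one_pow, mul_one] at e
  have p2 : (0:ℝ) < c₂ * 2^k₂ := by positivity
  have p3 : (0:ℝ) < c₃ * 2^k₃ := by positivity
  have p4 : (0:ℝ) < c₄ * 2^k₄ := by positivity
  linarith

lemma base_one_even (a₁ a₂ a₃ a₄ k₂ k₃ k₄ : ℕ) (c₁ c₂ c₃ c₄ : ℝ)
    (h1 : 0 < c₁) (h2 : 0 < c₂) (h3 : 0 < c₃) (h4 : 0 < c₄)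
    (d12 : ¬(a₁ = a₂ ∧ 0 = k₂)) (d34 : ¬(a₃ = a₄ ∧ k₃ = k₄))
    (hk3 : k₃ % 2 = 1) (hk4 : k₄ % 2 = 1)
    (hrel : Polynomial.C c₁ * X^a₁ + Polynomial.C c₂ * (1+X)^k₂ * X^a₂ =
      Polynomial.C c₃ * (1+X)^k₃ * X^a₃ + Polynomial.C c₄ * (1+X)^k₄ * X^a₄) : False := by
  rcases eq_or_ne k₂ 0 with h0 | h0
  · subst h0
    simp only [pow_zero, mul_one] at hrel
    exact caseB a₁ a₂ a₃ a₄ k₃ k₄ c₁ c₂ c₃ c₄ h1 h2 h3 h4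
      (fun h => d12 ⟨h, rfl⟩) (by omega) (by omega) d34 hrel
  · exact eval_contra a₁ a₂ a₃ a₄ k₂ k₃ k₄ c₁ c₂ (-c₃) (-c₄) h1.ne' h0 (by omega) (by omega)
      (by rw [map_neg, map_neg]; linear_combination hrel)

lemma base_two_even (a₁ a₂ a₃ a₄ k₂ k₃ k₄ : ℕ) (c₁ c₂ c₃ c₄ : ℝ)
    (h1 : 0 < c₁) (h2 : 0 < c₂) (h3 : 0 < c₃) (h4 : 0 < c₄)
    (d12 : ¬(a₁ = a₂ ∧ 0 = k₂)) (d13 : ¬(a₁ = a₃ ∧ 0 = k₃)) (d23 : ¬(a₂ = a₃ ∧ k₂ = k₃))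
    (hk2 : k₂ % 2 = 0) (hk3 : k₃ % 2 = 0) (hk4 : k₄ % 2 = 1)
    (hrel : Polynomial.C c₁ * X^a₁ + Polynomial.C c₂ * (1+X)^k₂ * X^a₂ +
        Polynomial.C c₃ * (1+X)^k₃ * X^a₃ = Polynomial.C c₄ * (1+X)^k₄ * X^a₄) : False := by
  rcases eq_or_ne k₂ 0 with h02 | h02 <;> rcases eq_or_ne k₃ 0 with h03 | h03
  · subst h02; subst h03
    simp only [pow_zero, mul_one] at hrel
    exact caseC_T3 a₁ a₂ a₃ a₄ k₄ c₁ c₂ c₃ c₄ h1 h2 h3 h4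
      (fun h => d12 ⟨h, rfl⟩) (fun h => d13 ⟨h, rfl⟩) (fun h => d23 ⟨h, rfl⟩) hk4 hrel
  · subst h02
    simp only [pow_zero, mul_one] at hrel
    exact caseC_T2 a₁ a₂ a₃ a₄ k₃ k₄ c₁ c₂ c₃ c₄ h1 h2 h3 h4
      (fun h => d12 ⟨h, rfl⟩) (by omega) (by omega) hrel
  · subst h03
    simp only [pow_zero, mul_one] at hrel
    exact caseC_T2 a₁ a₃ a₂ a₄ k₂ k₄ c₁ c₃ c₂ c₄ h1 h3 h2 h4
      (fun h => d13 ⟨h, rfl⟩) (by omega) (by omega) (by linear_combination hrel)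
  · exact eval_contra a₁ a₂ a₃ a₄ k₂ k₃ k₄ c₁ c₂ c₃ (-c₄) h1.ne' h02 h03 (by omega)
      (by rw [map_neg]; linear_combination hrel)

lemma sign_even {k : ℕ} (c : ℝ) (h : k % 2 = 0) :
    Polynomial.C ((-1:ℝ)^k * c) = Polynomial.C c := by
  rw [Even.neg_one_pow (Nat.even_iff.mpr h), one_mul]

lemma sign_odd {k : ℕ} (c : ℝ) (h : k % 2 = 1) :
    Polynomial.C ((-1:ℝ)^k * c) = -Polynomial.C c := by
  rw [Odd.neg_one_pow (Nat.odd_iff.mpr h), neg_one_mul, map_neg]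

lemma core4_base (a₁ a₂ a₃ a₄ k₂ k₃ k₄ : ℕ) (c₁ c₂ c₃ c₄ : ℝ)
    (h1 : 0 < c₁) (h2 : 0 < c₂) (h3 : 0 < c₃) (h4 : 0 < c₄)
    (d12 : ¬(a₁ = a₂ ∧ 0 = k₂)) (d13 : ¬(a₁ = a₃ ∧ 0 = k₃)) (d14 : ¬(a₁ = a₄ ∧ 0 = k₄))
    (d23 : ¬(a₂ = a₃ ∧ k₂ = k₃)) (d24 : ¬(a₂ = a₄ ∧ k₂ = k₄)) (d34 : ¬(a₃ = a₄ ∧ k₃ = k₄))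
    (hrel : Polynomial.C c₁ * X^a₁ + Polynomial.C ((-1)^k₂ * c₂) * (1+X)^k₂ * X^a₂ +
        Polynomial.C ((-1)^k₃ * c₃) * (1+X)^k₃ * X^a₃ +
        Polynomial.C ((-1)^k₄ * c₄) * (1+X)^k₄ * X^a₄ = 0) : False := by
  rcases Nat.mod_two_eq_zero_or_one k₂ with p2 | p2 <;>
    rcases Nat.mod_two_eq_zero_or_one k₃ with p3 | p3 <;>
    rcases Nat.mod_two_eq_zero_or_one k₄ with p4 | p4
  · -- eee
    rw [sign_even c₂ p2, sign_even c₃ p3, sign_even c₄ p4] at hrel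
    exact eval_one_contra a₁ a₂ a₃ a₄ k₂ k₃ k₄ c₁ c₂ c₃ c₄ h1 h2 h3 h4 hrel
  · -- eeo
    rw [sign_even c₂ p2, sign_even c₃ p3, sign_odd c₄ p4] at hrel
    exact base_two_even a₁ a₂ a₃ a₄ k₂ k₃ k₄ c₁ c₂ c₃ c₄ h1 h2 h3 h4 d12 d13 d23 p2 p3 p4
      (by linear_combination hrel)
  · -- eoe
    rw [sign_even c₂ p2, sign_odd c₃ p3, sign_even c₄ p4] at hrel
    exact base_two_even a₁ a₂ a₄ a₃ k₂ k₄ k₃ c₁ c₂ c₄ c₃ h1 h2 h4 h3 d12 d14 d24 p2 p4 p3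
      (by linear_combination hrel)
  · -- eoo
    rw [sign_even c₂ p2, sign_odd c₃ p3, sign_odd c₄ p4] at hrel
    exact base_one_even a₁ a₂ a₃ a₄ k₂ k₃ k₄ c₁ c₂ c₃ c₄ h1 h2 h3 h4 d12 d34 p3 p4
      (by linear_combination hrel)
  · -- oee
    rw [sign_odd c₂ p2, sign_even c₃ p3, sign_even c₄ p4] at hrel
    exact base_two_even a₁ a₃ a₄ a₂ k₃ k₄ k₂ c₁ c₃ c₄ c₂ h1 h3 h4 h2 d13 d14 d34 p3 p4 p2
      (by linear_combination hrel)
  · -- oeo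
    rw [sign_odd c₂ p2, sign_even c₃ p3, sign_odd c₄ p4] at hrel
    exact base_one_even a₁ a₃ a₂ a₄ k₃ k₂ k₄ c₁ c₃ c₂ c₄ h1 h3 h2 h4 d13
      (fun h => d24 ⟨h.1, h.2⟩) p2 p4 (by linear_combination hrel)
  · -- ooe
    rw [sign_odd c₂ p2, sign_odd c₃ p3, sign_even c₄ p4] at hrel
    exact base_one_even a₁ a₄ a₂ a₃ k₄ k₂ k₃ c₁ c₄ c₂ c₃ h1 h4 h2 h3 d14 d23 p2 p3
      (by linear_combination hrel)
  · -- ooo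
    rw [sign_odd c₂ p2, sign_odd c₃ p3, sign_odd c₄ p4] at hrel
    exact eval_contra a₁ a₂ a₃ a₄ k₂ k₃ k₄ c₁ (-c₂) (-c₃) (-c₄) h1.ne'
      (by omega) (by omega) (by omega)
      (by rw [map_neg, map_neg, map_neg]; linear_combination hrel)

lemma one_add_X_ne_zero : (1 + X : ℝ[X]) ≠ 0 := by
  have h : (1+X:ℝ[X]) = X + Polynomial.C 1 := by simp [add_comm]
  rw [h]; exact Polynomial.X_add_C_ne_zero 1

lemma core4 : ∀ (n a₁ a₂ a₃ a₄ k₁ k₂ k₃ k₄ : ℕ) (c₁ c₂ c₃ c₄ : ℝ),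
    k₁ + k₂ + k₃ + k₄ = n → 0 < c₁ → 0 < c₂ → 0 < c₃ → 0 < c₄ →
    ¬(a₁ = a₂ ∧ k₁ = k₂) → ¬(a₁ = a₃ ∧ k₁ = k₃) → ¬(a₁ = a₄ ∧ k₁ = k₄) →
    ¬(a₂ = a₃ ∧ k₂ = k₃) → ¬(a₂ = a₄ ∧ k₂ = k₄) → ¬(a₃ = a₄ ∧ k₃ = k₄) →
    Polynomial.C ((-1)^k₁ * c₁) * (1+X)^k₁ * X^a₁ +
      Polynomial.C ((-1)^k₂ * c₂) * (1+X)^k₂ * X^a₂ +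
      Polynomial.C ((-1)^k₃ * c₃) * (1+X)^k₃ * X^a₃ +
      Polynomial.C ((-1)^k₄ * c₄) * (1+X)^k₄ * X^a₄ = 0 → False := by
  intro n
  induction n using Nat.strong_induction_on with
  | _ n ih =>
    intro a₁ a₂ a₃ a₄ k₁ k₂ k₃ k₄ c₁ c₂ c₃ c₄ hsum h1 h2 h3 h4 d12 d13 d14 d23 d24 d34 hrel
    by_cases h0 : k₁ = 0 ∨ k₂ = 0 ∨ k₃ = 0 ∨ k₄ = 0
    · rcases h0 with h0 | h0 | h0 | h0
      · subst h0
        rw [pow_zero, one_mul, pow_zero, mul_one] at hrel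
        exact core4_base a₁ a₂ a₃ a₄ k₂ k₃ k₄ c₁ c₂ c₃ c₄ h1 h2 h3 h4
          d12 d13 d14 d23 d24 d34 hrel
      · subst h0
        rw [pow_zero, one_mul, pow_zero, mul_one] at hrel
        exact core4_base a₂ a₁ a₃ a₄ k₁ k₃ k₄ c₂ c₁ c₃ c₄ h2 h1 h3 h4
          (fun h => d12 ⟨h.1.symm, h.2.symm⟩) d23 d24 d13 d14 d34
          (by linear_combination hrel)
      · subst h0
        rw [pow_zero, one_mul, pow_zero, mul_one] at hrel
        exact core4_base a₃ a₁ a₂ a₄ k₁ k₂ k₄ c₃ c₁ c₂ c₄ h3 h1 h2 h4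
          (fun h => d13 ⟨h.1.symm, h.2.symm⟩) (fun h => d23 ⟨h.1.symm, h.2.symm⟩) d34
          d12 d14 d24 (by linear_combination hrel)
      · subst h0
        rw [pow_zero, one_mul, pow_zero, mul_one] at hrel
        exact core4_base a₄ a₁ a₂ a₃ k₁ k₂ k₃ c₄ c₁ c₂ c₃ h4 h1 h2 h3
          (fun h => d14 ⟨h.1.symm, h.2.symm⟩) (fun h => d24 ⟨h.1.symm, h.2.symm⟩)
          (fun h => d34 ⟨h.1.symm, h.2.symm⟩) d12 d13 d23 (by linear_combination hrel)
    · push_neg at h0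
      obtain ⟨m₁, rfl⟩ : ∃ m, k₁ = m + 1 := ⟨k₁ - 1, by omega⟩
      obtain ⟨m₂, rfl⟩ : ∃ m, k₂ = m + 1 := ⟨k₂ - 1, by omega⟩
      obtain ⟨m₃, rfl⟩ : ∃ m, k₃ = m + 1 := ⟨k₃ - 1, by omega⟩
      obtain ⟨m₄, rfl⟩ : ∃ m, k₄ = m + 1 := ⟨k₄ - 1, by omega⟩
      rw [show ((-1:ℝ))^(m₁+1) * c₁ = -((-1)^m₁ * c₁) from by ring, map_neg,
        show ((-1:ℝ))^(m₂+1) * c₂ = -((-1)^m₂ * c₂) from by ring, map_neg,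
        show ((-1:ℝ))^(m₃+1) * c₃ = -((-1)^m₃ * c₃) from by ring, map_neg,
        show ((-1:ℝ))^(m₄+1) * c₄ = -((-1)^m₄ * c₄) from by ring, map_neg] at hrel
      have key : (1 + X : ℝ[X]) *
          (Polynomial.C ((-1)^m₁ * c₁) * (1+X)^m₁ * X^a₁ +
           Polynomial.C ((-1)^m₂ * c₂) * (1+X)^m₂ * X^a₂ +
           Polynomial.C ((-1)^m₃ * c₃) * (1+X)^m₃ * X^a₃ +
           Polynomial.C ((-1)^m₄ * c₄) * (1+X)^m₄ * X^a₄) = 0 := by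
        linear_combination -hrel
      rcases mul_eq_zero.mp key with h | h
      · exact one_add_X_ne_zero h
      · exact ih (m₁+m₂+m₃+m₄) (by omega) a₁ a₂ a₃ a₄ m₁ m₂ m₃ m₄ c₁ c₂ c₃ c₄ rfl
          h1 h2 h3 h4
          (fun hh => d12 ⟨hh.1, by omega⟩) (fun hh => d13 ⟨hh.1, by omega⟩)
          (fun hh => d14 ⟨hh.1, by omega⟩) (fun hh => d23 ⟨hh.1, by omega⟩)
          (fun hh => d24 ⟨hh.1, by omega⟩) (fun hh => d34 ⟨hh.1, by omega⟩) h

lemma core1 (a₁ k₁ : ℕ) (c₁ : ℝ) (h1 : 0 < c₁)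
    (hrel : Polynomial.C ((-1)^k₁ * c₁) * (1+X)^k₁ * X^a₁ = 0) : False := by
  have hc := congrArg (fun f => Polynomial.coeff f a₁) hrel
  simp only [coeff_term, coeff_zero, le_refl, if_true, Nat.sub_self, Nat.choose_zero_right,
    Nat.cast_one, mul_one] at hc
  rcases mul_eq_zero.mp hc with h | h
  · exact pow_ne_zero k₁ (neg_ne_zero.mpr one_ne_zero) h
  · exact h1.ne' h

lemma core2_eq (a₁ a₂ k₁ k₂ : ℕ) (c₁ c₂ : ℝ) (h1 : 0 < c₁) (h2 : 0 < c₂)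
    (hrel : Polynomial.C c₁ * (1+X)^k₁ * X^a₁ = Polynomial.C c₂ * (1+X)^k₂ * X^a₂) :
    a₁ = a₂ ∧ k₁ = k₂ := by
  have key : ∀ n : ℕ, a₁ ≤ n → n ≤ a₁ + k₁ → (a₂ ≤ n ∧ n ≤ a₂ + k₂) := by
    intro n u v
    have hc := congrArg (fun f => Polynomial.coeff f n) hrel
    simp only [coeff_term] at hc
    apply bounds_of_if_term h2
    rw [← hc]
    rw [if_pos u]
    have h3 : 0 < (k₁.choose (n-a₁) : ℝ) := by
      exact_mod_cast Nat.choose_pos (by omega)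
    positivity
  have key2 : ∀ n : ℕ, a₂ ≤ n → n ≤ a₂ + k₂ → (a₁ ≤ n ∧ n ≤ a₁ + k₁) := by
    intro n u v
    have hc := congrArg (fun f => Polynomial.coeff f n) hrel
    simp only [coeff_term] at hc
    apply bounds_of_if_term h1
    rw [hc]
    rw [if_pos u]
    have h3 : 0 < (k₂.choose (n-a₂) : ℝ) := by
      exact_mod_cast Nat.choose_pos (by omega)
    positivity
  have b1 := key a₁ (by omega) (by omega)
  have b2 := key (a₁+k₁) (by omega) (by omega)
  have b3 := key2 a₂ (by omega) (by omega)
  have b4 := key2 (a₂+k₂) (by omega) (by omega)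
  omega

lemma core2 (a₁ a₂ k₁ k₂ : ℕ) (c₁ c₂ : ℝ) (h1 : 0 < c₁) (h2 : 0 < c₂)
    (d : ¬(a₁ = a₂ ∧ k₁ = k₂))
    (hrel : Polynomial.C ((-1)^k₁ * c₁) * (1+X)^k₁ * X^a₁ +
      Polynomial.C ((-1)^k₂ * c₂) * (1+X)^k₂ * X^a₂ = 0) : False := by
  rcases Nat.mod_two_eq_zero_or_one k₁ with p1 | p1 <;>
    rcases Nat.mod_two_eq_zero_or_one k₂ with p2 | p2
  · rw [sign_even c₁ p1, sign_even c₂ p2] at hrel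
    have e := congrArg (Polynomial.eval (1:ℝ)) hrel
    rw [eval_add, eval_one_term, eval_one_term, eval_zero] at e
    have q1 : (0:ℝ) < c₁ * 2^k₁ := by positivity
    have q2 : (0:ℝ) < c₂ * 2^k₂ := by positivity
    linarith
  · rw [sign_even c₁ p1, sign_odd c₂ p2] at hrel
    exact d (core2_eq a₁ a₂ k₁ k₂ c₁ c₂ h1 h2 (by linear_combination hrel))
  · rw [sign_odd c₁ p1, sign_even c₂ p2] at hrel
    have := core2_eq a₂ a₁ k₂ k₁ c₂ c₁ h2 h1 (by linear_combination hrel)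
    exact d ⟨this.1.symm, this.2.symm⟩
  · rw [sign_odd c₁ p1, sign_odd c₂ p2] at hrel
    have e := congrArg (Polynomial.eval (1:ℝ)) hrel
    rw [show (-Polynomial.C c₁ * (1+X)^k₁ * X^a₁ : ℝ[X]) = -(Polynomial.C c₁ * (1+X)^k₁ * X^a₁) from by ring,
      show (-Polynomial.C c₂ * (1+X)^k₂ * X^a₂ : ℝ[X]) = -(Polynomial.C c₂ * (1+X)^k₂ * X^a₂) from by ring,
      eval_add, eval_neg, eval_neg, eval_one_term, eval_one_term, eval_zero] at e
    have q1 : (0:ℝ) < c₁ * 2^k₁ := by positivity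
    have q2 : (0:ℝ) < c₂ * 2^k₂ := by positivity
    linarith

lemma core {ι : Type*} [DecidableEq ι] (S : Finset ι) (a k : ι → ℕ) (c : ι → ℝ)
    (hc : ∀ i ∈ S, 0 < c i)
    (hinj : ∀ i ∈ S, ∀ j ∈ S, a i = a j → k i = k j → i = j)
    (hrel : ∑ i ∈ S, Polynomial.C ((-1)^(k i) * c i) * (1+X)^(k i) * X^(a i) = 0)
    (hcard : S.card ≤ 4) : S.card = 0 ∨ S.card = 3 := by
  have hd : ∀ i ∈ S, ∀ j ∈ S, i ≠ j → ¬(a i = a j ∧ k i = k j) :=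
    fun i hi j hj hij ⟨x, y⟩ => hij (hinj i hi j hj x y)
  have hcases : S.card = 0 ∨ S.card = 1 ∨ S.card = 2 ∨ S.card = 3 ∨ S.card = 4 := by omega
  rcases hcases with h | h | h | h | h
  · exact Or.inl h
  · exfalso
    obtain ⟨i, rfl⟩ := Finset.card_eq_one.mp h
    rw [Finset.sum_singleton] at hrel
    exact core1 _ _ _ (hc i (Finset.mem_singleton_self i)) hrel
  · exfalso
    obtain ⟨i, j, hij, rfl⟩ := Finset.card_eq_two.mp h
    have hi : i ∈ ({i, j} : Finset ι) := by simp
    have hj : j ∈ ({i, j} : Finset ι) := by simp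
    rw [Finset.sum_pair hij] at hrel
    exact core2 _ _ _ _ _ _ (hc i hi) (hc j hj) (hd i hi j hj hij) hrel
  · exact Or.inr h
  · exfalso
    have hne : S.Nonempty := by rw [← Finset.card_pos]; omega
    obtain ⟨i, hi⟩ := hne
    have h3 : (S.erase i).card = 3 := by
      rw [Finset.card_erase_of_mem hi]; omega
    obtain ⟨x, y, z, hxy, hxz, hyz, hS⟩ := Finset.card_eq_three.mp h3
    have hSeq : S = insert i {x, y, z} := by
      rw [← hS, Finset.insert_erase hi]
    have hix : i ≠ x := by
      intro hh
      have : x ∈ S.erase i := hS ▸ by simp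
      rw [← hh] at this
      exact (Finset.notMem_erase i S) this
    have hiy : i ≠ y := by
      intro hh
      have : y ∈ S.erase i := hS ▸ by simp
      rw [← hh] at this
      exact (Finset.notMem_erase i S) this
    have hiz : i ≠ z := by
      intro hh
      have : z ∈ S.erase i := hS ▸ by simp
      rw [← hh] at this
      exact (Finset.notMem_erase i S) this
    have hx : x ∈ S := hSeq ▸ by simp
    have hy : y ∈ S := hSeq ▸ by simp
    have hz : z ∈ S := hSeq ▸ by simp
    rw [hSeq, Finset.sum_insert (by simp [hix, hiy, hiz]),
      Finset.sum_insert (by simp [hxy, hxz]), Finset.sum_insert (by simp [hyz]),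
      Finset.sum_singleton] at hrel
    exact core4 (k i + k x + k y + k z) (a i) (a x) (a y) (a z) (k i) (k x) (k y) (k z)
      (c i) (c x) (c y) (c z) rfl (hc i hi) (hc x hx) (hc y hy) (hc z hz)
      (hd i hi x hx hix) (hd i hi y hy hiy) (hd i hi z hz hiz)
      (hd x hx y hy hxy) (hd x hx z hz hxz) (hd y hy z hz hyz)
      (by linear_combination hrel)

abbrev A := Polynomial (Polynomial ℝ)

noncomputable def g : Fin 3 → A :=
  ![Polynomial.C Polynomial.X * Polynomial.X, Polynomial.X,
    -(Polynomial.C (1 + Polynomial.X) * Polynomial.X)]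

noncomputable def w (d : Fin 3 →₀ ℕ) : ℕ := d 0 + d 1 + d 2

lemma term_eq (d : Fin 3 →₀ ℕ) (r : ℝ) :
    algebraMap ℝ A r * ∏ i, g i ^ d i =
      Polynomial.C (Polynomial.C ((-1)^(d 2) * r) *
        (1 + Polynomial.X)^(d 2) * Polynomial.X^(d 0)) * Polynomial.X^(w d) := by
  rw [Fin.prod_univ_three]
  simp only [g, w, Matrix.cons_val_zero, Matrix.cons_val_one, Matrix.head_cons,
    Matrix.cons_val_two, Matrix.tail_cons]
  have halg : algebraMap ℝ A r = Polynomial.C (Polynomial.C r) := by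
    simp [Polynomial.algebraMap_apply]
  have hneg : (-(Polynomial.C (1 + Polynomial.X) * Polynomial.X) : A)^(d 2) =
      (-1 : A)^(d 2) * (Polynomial.C (1 + Polynomial.X))^(d 2) * (Polynomial.X : A)^(d 2) := by
    rw [← mul_pow, ← mul_pow]; ring_nf
  rw [halg, hneg]
  simp only [map_mul, map_pow, map_neg, map_one, map_add]
  ring

theorem degree_rel (q p : MvPolynomial (Fin 3) ℝ)
    (hp : p = (MvPolynomial.X 0 + MvPolynomial.X 1 + MvPolynomial.X 2) * q) :
    ∀ D : ℕ, ∑ d ∈ p.support.filter (fun d => w d = D),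
      Polynomial.C ((-1)^(d 2) * p.coeff d) * (1+X)^(d 2) * X^(d 0) = 0 := by
  intro D
  have hs : MvPolynomial.aeval g (MvPolynomial.X 0 + MvPolynomial.X 1 + MvPolynomial.X 2
      : MvPolynomial (Fin 3) ℝ) = 0 := by
    simp only [map_add, MvPolynomial.aeval_X, g, Matrix.cons_val_zero, Matrix.cons_val_one,
      Matrix.head_cons, Matrix.cons_val_two, Matrix.tail_cons, map_one, map_add]
    ring
  have hP : MvPolynomial.aeval g p = 0 := by
    rw [hp, map_mul, hs, zero_mul]
  rw [MvPolynomial.aeval_def, MvPolynomial.eval₂_eq'] at hP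
  have hP2 : ∑ d ∈ p.support,
      Polynomial.C (Polynomial.C ((-1)^(d 2) * p.coeff d) *
        (1 + Polynomial.X)^(d 2) * Polynomial.X^(d 0)) * (Polynomial.X : A)^(w d) = 0 := by
    rw [← hP]
    exact Finset.sum_congr rfl fun d _ => (term_eq d (p.coeff d)).symm
  have hco := congrArg (fun f : A => f.coeff D) hP2
  simp only [finset_sum_coeff, coeff_C_mul, coeff_X_pow, coeff_zero, mul_ite, mul_one,
    mul_zero] at hco
  simp only [@eq_comm ℕ D] at hco
  rw [Finset.sum_filter]
  exact hco

end SOS3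


open MvPolynomial

/-- **SOS Conjecture for `n = 3`, diagonal case** (Theorem 1.2).
Let `q ∈ ℝ[x₁,x₂,x₃]` and `p = (x₁+x₂+x₃)·q`.  If every coefficient of `p`
is nonnegative (equivalently, the corresponding Hermitian form
`r(z,z̄)‖z‖²` is a squared norm `‖h‖²`), then the rank `ρ(p)`, i.e. the number
of monomials of `p` with nonzero coefficient, is `0`, `3`, or at least `5`. -/
theorem sos_three_variables_diagonal
    (q : MvPolynomial (Fin 3) ℝ)
    (p : MvPolynomial (Fin 3) ℝ)
    (hp : p = (X 0 + X 1 + X 2) * q)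
    (hnonneg : ∀ m : Fin 3 →₀ ℕ, 0 ≤ p.coeff m) :
    p.support.card = 0 ∨ p.support.card = 3 ∨ 5 ≤ p.support.card := by
  by_cases hbig : 5 ≤ p.support.card
  · exact Or.inr (Or.inr hbig)
  · have hcard : p.support.card ≤ 4 := by omega
    have hfib : ∀ D : ℕ, (p.support.filter (fun d => SOS3.w d = D)).card = 0 ∨
        (p.support.filter (fun d => SOS3.w d = D)).card = 3 := by
      intro D
      apply SOS3.core (a := fun d => d 0) (k := fun d => d 2) (c := fun d => p.coeff d)
      · intro i hi
        have hmem := Finset.mem_filter.mp hi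
        have hne := MvPolynomial.mem_support_iff.mp hmem.1
        exact lt_of_le_of_ne (hnonneg i) (Ne.symm hne)
      · intro i hi j hj h0 h2
        have hwi := (Finset.mem_filter.mp hi).2
        have hwj := (Finset.mem_filter.mp hj).2
        have h1 : i 1 = j 1 := by simp only [SOS3.w] at hwi hwj; omega
        ext t
        fin_cases t
        · exact h0
        · exact h1
        · exact h2
      · exact SOS3.degree_rel q p hp D
      · exact le_trans (Finset.card_le_card (Finset.filter_subset _ _)) hcard
    have hsum : p.support.card = ∑ D ∈ p.support.image SOS3.w,
        (p.support.filter (fun d => SOS3.w d = D)).card :=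
      Finset.card_eq_sum_card_fiberwise (fun x hx => Finset.mem_image_of_mem SOS3.w hx)
    have hdvd : 3 ∣ p.support.card := by
      rw [hsum]
      apply Finset.dvd_sum
      intro D _
      rcases hfib D with h | h <;> rw [h]
      · exact dvd_zero 3
    omega
end

section
/- Let n ≥ 1, d ≥ 1. Let f₁,…,f_P and g₁,…,g_N be homogeneous polynomials of degree d−1 in ℂ[z₁,…,zₙ], and let h₁,…,h_K be polynomials in ℂ[z₁,…,zₙ] such that for all z ∈ ℂⁿ, (Σⱼ |fⱼ(z)|² − Σₖ |gₖ(z)|²)·(Σᵢ |zᵢ|²) = Σₗ |hₗ(z)|². Then the degree-d homogeneous components of the ideal ⟨f₁,…,f_P⟩ and of the ideal ⟨f₁,…,f_P,g₁,…,g_N⟩ in ℂ[z₁,…,zₙ] coincide; in particular their ℂ-dimensions are equal. -/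
/-!
Multiplying out, the hypothesis says `∑ |zᵢ fⱼ(z)|² = ∑ |zᵢ gₖ(z)|² + ∑ |hₗ(z)|²`. An identity between
sums of squared moduli of polynomials polarizes to `∑ pₐ(z) conj pₐ(w) = ∑ q_b(z) conj q_b(w)` for
independent `z, w`, and this puts every `q_b` in the linear span of the `pₐ`; so each `zᵢ gₖ` lies in
the span of the `zᵢ fⱼ`. The degree-`d` part of an ideal generated by forms of degree `d - 1` is
spanned by the products `zᵢ · generator`, so the two degree-`d` components agree.
-/

open MvPolynomial

/-- The degree-`ℓ` homogeneous component of an ideal `I`, as a subspace. -/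
noncomputable def idealDegComp {n : ℕ} (I : Ideal (MvPolynomial (Fin n) ℂ)) (ℓ : ℕ) :
    Submodule ℂ (MvPolynomial (Fin n) ℂ) where
  carrier := {p | p ∈ I ∧ p.IsHomogeneous ℓ}
  add_mem' := fun ha hb => ⟨I.add_mem ha.1 hb.1, ha.2.add hb.2⟩
  zero_mem' := ⟨I.zero_mem, MvPolynomial.isHomogeneous_zero _ _ _⟩
  smul_mem' := fun c p hp =>
    ⟨by simpa [MvPolynomial.smul_eq_C_mul] using I.mul_mem_left (MvPolynomial.C c) hp.1,
     by simpa [MvPolynomial.smul_eq_C_mul] using hp.2.C_mul c⟩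

open Complex ComplexConjugate

namespace MvPolynomial

theorem eval_aeval {R σ τ : Type*} [CommSemiring R] (x : τ → R) (v : σ → MvPolynomial τ R)
    (Q : MvPolynomial σ R) :
    eval x (aeval v Q) = eval (fun i => eval x (v i)) Q := by
  rw [aeval_eq_bind₁]
  exact eval₂Hom_bind₁ _ _ _ _

theorem homogeneousComponent_add_mul_of_isHomogeneous {σ R : Type*} [CommSemiring R]
    {s : MvPolynomial σ R} {e : ℕ} (hs : s.IsHomogeneous e) (k : ℕ) (c : MvPolynomial σ R) :
    homogeneousComponent (k + e) (c * s) = homogeneousComponent k c * s := by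
  let _ := MvPolynomial.gradedAlgebra (σ := σ) (R := R)
  have hdec (φ : MvPolynomial σ R) (i : ℕ) :
      (DirectSum.decompose (homogeneousSubmodule σ R) φ i : MvPolynomial σ R) =
        homogeneousComponent i φ :=
    decomposition.decompose'_apply φ i
  have := DirectSum.coe_decompose_mul_of_right_mem_of_le (𝒜 := homogeneousSubmodule σ R) (a := c)
    ((mem_homogeneousSubmodule e s).mpr hs) (le_add_self : e ≤ k + e)
  rwa [hdec, hdec, add_tsub_cancel_right] at this

variable {σ : Type*}

theorem conj_eval (w : σ → ℂ) (r : MvPolynomial σ ℂ) :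
    conj (eval w r) = eval (conj ∘ w) (map (starRingEnd ℂ) r) := by
  rw [eval_map, eval₂_comp]

theorem eq_zero_of_eval_sumElim_conj {Q : MvPolynomial (σ ⊕ σ) ℂ}
    (hQ : ∀ z : σ → ℂ, eval (Sum.elim z (conj ∘ z)) Q = 0) : Q = 0 := by
  -- `(x, y) ↦ (x + iy, x - iy)` is invertible and sends real points to the points `(z, z̄)`
  let toConj : MvPolynomial (σ ⊕ σ) ℂ →ₐ[ℂ] MvPolynomial (σ ⊕ σ) ℂ :=
    aeval (Sum.elim (fun i => X (.inl i) + I • X (.inr i)) (fun i => X (.inl i) - I • X (.inr i)))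
  let ofConj : MvPolynomial (σ ⊕ σ) ℂ →ₐ[ℂ] MvPolynomial (σ ⊕ σ) ℂ :=
    aeval (Sum.elim (fun i => (1 / 2 : ℂ) • (X (.inl i) + X (.inr i)))
      (fun i => (1 / (2 * I)) • (X (.inl i) - X (.inr i))))
  have h_inv : ofConj.comp toConj = AlgHom.id ℂ _ := by
    apply algHom_ext
    rintro (i | i) <;>
    · simp only [AlgHom.comp_apply, toConj, ofConj, aeval_X, Sum.elim_inl, Sum.elim_inr,
        map_add, map_sub, map_smul, AlgHom.id_apply]
      match_scalars <;> field_simp <;> ring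
  have h_real : toConj Q = 0 := by
    refine funext_set (fun _ => Set.range ((↑) : ℝ → ℂ))
      (fun _ => Set.infinite_range_of_injective ofReal_injective) fun x hx => ?_
    choose y hy using fun i => hx i (Set.mem_univ i)
    let z : σ → ℂ := fun i => x (.inl i) + I * x (.inr i)
    have h_point : (fun s => eval x (Sum.elim (fun i => X (.inl i) + I • X (.inr i))
        (fun i => X (.inl i) - I • X (.inr i)) s)) = Sum.elim z (conj ∘ z) := by
      ext (i | i)
      · simp [z]
      · simp [z, ← hy, sub_eq_add_neg]
    rw [map_zero, eval_aeval, h_point, hQ]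
  rw [← AlgHom.id_apply (R := ℂ) Q, ← h_inv, AlgHom.comp_apply, h_real, map_zero]

variable {ι κ : Type*} [Fintype ι] [Fintype κ] {p : ι → MvPolynomial σ ℂ}
  {q : κ → MvPolynomial σ ℂ}

theorem sum_eval_mul_conj_eval_eq_of_sum_normSq_eq
    (hpq : ∀ z, ∑ a, normSq (eval z (p a)) = ∑ b, normSq (eval z (q b))) (z w : σ → ℂ) :
    ∑ a, eval z (p a) * conj (eval w (p a)) = ∑ b, eval z (q b) * conj (eval w (q b)) := by
  let lift (r : MvPolynomial σ ℂ) : MvPolynomial (σ ⊕ σ) ℂ :=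
    rename Sum.inl r * rename Sum.inr (map (starRingEnd ℂ) r)
  have eval_lift (z w : σ → ℂ) (r : MvPolynomial σ ℂ) :
      eval (Sum.elim z (conj ∘ w)) (lift r) = eval z r * conj (eval w r) := by
    rw [map_mul, eval_rename, eval_rename, Sum.elim_comp_inl, Sum.elim_comp_inr, conj_eval]
  have h_lift : ∑ a, lift (p a) - ∑ b, lift (q b) = 0 := eq_zero_of_eval_sumElim_conj fun z => by
    simp only [map_sub, map_sum, eval_lift, mul_conj, ← ofReal_sum, hpq, sub_self]
  simpa only [map_sub, map_sum, eval_lift, map_zero, sub_eq_zero] using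
    congrArg (eval (Sum.elim z (conj ∘ w))) h_lift

theorem mem_span_of_sum_normSq_eq
    (hpq : ∀ z, ∑ a, normSq (eval z (p a)) = ∑ b, normSq (eval z (q b))) (b : κ) :
    q b ∈ Submodule.span ℂ (Set.range p) := by
  rw [← Subspace.forall_mem_dualAnnihilator_apply_eq_zero_iff]
  intro φ hφ
  rw [Submodule.mem_dualAnnihilator] at hφ
  -- `φ` kills `∑ conj (q_b w) • q_b` for every `w`, hence `∑ conj (φ q_b) • q_b = 0`,
  -- and applying `φ` once more gives `∑ |φ q_b|² = 0`
  have hφp (a : ι) : φ (p a) = 0 := hφ _ (Submodule.subset_span ⟨a, rfl⟩)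
  have h_orth (w : σ → ℂ) : ∑ b, conj (eval w (q b)) * φ (q b) = 0 := by
    have h_poly : ∑ a, conj (eval w (p a)) • p a = ∑ b, conj (eval w (q b)) • q b :=
      MvPolynomial.funext fun z => by
        simpa [smul_eq_C_mul, mul_comm] using sum_eval_mul_conj_eval_eq_of_sum_normSq_eq hpq z w
    simpa [hφp] using (congrArg φ h_poly).symm
  have h_vanish : ∑ b, conj (φ (q b)) • q b = 0 := MvPolynomial.funext fun w => by
    simpa [smul_eq_C_mul, mul_comm] using congrArg conj (h_orth w)
  have h_normSq : ∑ b, normSq (φ (q b)) = 0 := by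
    have := congrArg φ h_vanish
    simp only [map_sum, map_smul, smul_eq_mul, ← normSq_eq_conj_mul_self, map_zero] at this
    exact_mod_cast this
  exact normSq_eq_zero.mp <|
    (Finset.sum_eq_zero_iff_of_nonneg fun b _ => normSq_nonneg _).mp h_normSq b (Finset.mem_univ b)

theorem sum_normSq_eval_X_mul [Fintype σ] (z : σ → ℂ) (u : ι → MvPolynomial σ ℂ) :
    ∑ x : σ × ι, normSq (eval z (X x.1 * u x.2)) =
      (∑ i, normSq (z i)) * ∑ j, normSq (eval z (u j)) := by
  simp only [map_mul, eval_X, Finset.sum_mul_sum, Fintype.sum_prod_type]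

end MvPolynomial

theorem idealDegComp_succ_span_eq_span_X_mul {n e : ℕ} {S : Set (MvPolynomial (Fin n) ℂ)}
    (hS : ∀ s ∈ S, s.IsHomogeneous e) :
    idealDegComp (Ideal.span S) (e + 1) =
      Submodule.span ℂ (Set.image2 (· * ·) (Set.range X) S) := by
  apply le_antisymm
  · rintro _ ⟨h_mem, h_hom⟩
    obtain ⟨m, c, s, rfl⟩ := Submodule.mem_span_set'.mp h_mem
    rw [← homogeneousComponent_eq_self h_hom, map_sum]
    refine Submodule.sum_mem _ fun i _ => ?_
    rw [smul_eq_mul, add_comm e 1, homogeneousComponent_add_mul_of_isHomogeneous (hS _ (s i).2)]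
    have h_linear : homogeneousComponent 1 (c i) ∈ Submodule.span ℂ (Set.range X) :=
      homogeneousSubmodule_one_eq_span_X (σ := Fin n) (R := ℂ) ▸ homogeneousComponent_mem 1 (c i)
    have := Submodule.mul_mem_mul h_linear (Submodule.subset_span (s i).2)
    rwa [Submodule.span_mul_span] at this
  · rw [Submodule.span_le]
    rintro _ ⟨_, ⟨i, rfl⟩, s, hs, rfl⟩
    refine ⟨Ideal.mul_mem_left _ _ (Ideal.subset_span hs), ?_⟩
    simpa only [add_comm 1 e] using (isHomogeneous_X ℂ i).mul (hS s hs)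

theorem degree_d_components_coincide_general
    {n : ℕ} {d : ℕ} (hd : 1 ≤ d) {P N K : ℕ}
    (f : Fin P → MvPolynomial (Fin n) ℂ)
    (g : Fin N → MvPolynomial (Fin n) ℂ)
    (h : Fin K → MvPolynomial (Fin n) ℂ)
    (hf : ∀ j, (f j).IsHomogeneous (d - 1))
    (hg : ∀ k, (g k).IsHomogeneous (d - 1))
    (hsos : ∀ z : Fin n → ℂ,
      ((∑ j, Complex.normSq (eval z (f j))) - ∑ k, Complex.normSq (eval z (g k)))
        * (∑ i, Complex.normSq (z i)) = ∑ l, Complex.normSq (eval z (h l))) :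
    idealDegComp (Ideal.span (Set.range f)) d
        = idealDegComp (Ideal.span (Set.range f ∪ Set.range g)) d ∧
      Module.finrank ℂ (idealDegComp (Ideal.span (Set.range f)) d)
        = Module.finrank ℂ (idealDegComp (Ideal.span (Set.range f ∪ Set.range g)) d) := by
  obtain ⟨e, rfl⟩ := Nat.exists_eq_add_of_le' hd
  simp only [Nat.add_sub_cancel] at hf hg
  have h_sos (z : Fin n → ℂ) : ∑ x : Fin n × Fin P, normSq (eval z (X x.1 * f x.2)) =
      ∑ b, normSq (eval z (Sum.elim (fun x : Fin n × Fin N => X x.1 * g x.2) h b)) := by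
    rw [Fintype.sum_sum_type]
    simp only [Sum.elim_inl, Sum.elim_inr, sum_normSq_eval_X_mul, ← hsos z]
    ring
  have hg_mem : Set.image2 (· * ·) (Set.range X) (Set.range g) ⊆
      Submodule.span ℂ (Set.image2 (· * ·) (Set.range X) (Set.range f)) := by
    rintro _ ⟨_, ⟨i, rfl⟩, _, ⟨k, rfl⟩, rfl⟩
    rw [Set.image2_range]
    exact mem_span_of_sum_normSq_eq h_sos (Sum.inl (i, k))
  have h_eq : idealDegComp (Ideal.span (Set.range f)) (e + 1) =
      idealDegComp (Ideal.span (Set.range f ∪ Set.range g)) (e + 1) := by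
    rw [idealDegComp_succ_span_eq_span_X_mul (Set.forall_mem_range.mpr hf),
      idealDegComp_succ_span_eq_span_X_mul (by rintro _ (⟨j, rfl⟩ | ⟨k, rfl⟩) <;> simp [hf, hg]),
      Set.image2_union_right, Submodule.span_union, left_eq_sup]
    exact Submodule.span_le.mpr hg_mem
  exact ⟨h_eq, by rw [h_eq]⟩

/-- **Lemma 2.1 (D'Angelo).**  If `(‖f‖² − ‖g‖²)·‖z‖² = ‖h‖²` with the `fⱼ`, `gₖ`
homogeneous of degree `d−1`, then the degree-`d` components of the ideals
`⟨f⟩` and `⟨f, g⟩` coincide; in particular their dimensions (Hilbert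
functions at `d`) are equal. -/
theorem degree_d_components_coincide
    {n : ℕ} (hn : 1 ≤ n) {d : ℕ} (hd : 1 ≤ d) {P N K : ℕ}
    (f : Fin P → MvPolynomial (Fin n) ℂ)
    (g : Fin N → MvPolynomial (Fin n) ℂ)
    (h : Fin K → MvPolynomial (Fin n) ℂ)
    (hf : ∀ j, (f j).IsHomogeneous (d - 1))
    (hg : ∀ k, (g k).IsHomogeneous (d - 1))
    (hsos : ∀ z : Fin n → ℂ,
      ((∑ j, Complex.normSq (eval z (f j))) - ∑ k, Complex.normSq (eval z (g k)))
        * (∑ i, Complex.normSq (z i)) = ∑ l, Complex.normSq (eval z (h l))) :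
    idealDegComp (Ideal.span (Set.range f)) d
        = idealDegComp (Ideal.span (Set.range f ∪ Set.range g)) d ∧
      Module.finrank ℂ (idealDegComp (Ideal.span (Set.range f)) d)
        = Module.finrank ℂ (idealDegComp (Ideal.span (Set.range f ∪ Set.range g)) d) :=
  degree_d_components_coincide_general hd f g h hf hg hsos
end

section
/- Let n ≥ 1 and d ≥ 2, and let M(k) = M_{n,d−1}(k) = C(d+n−1, d) − (C(d+n−2, d−1) − k)^{<d−1>}. Then: (a) for all integers 0 ≤ k ≤ n, M(k) = nk − k(k−1)/2; (b) for all integers 0 ≤ j ≤ n, M(n−j) = n(n+1)/2 − j(j+1)/2; (c) for all integers 0 ≤ j ≤ n−1 such that n+j ≤ C(n+d−2, d−1), M(n+j) = n(n+1)/2 + nj − j(j+1)/2. -/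
/-- `macaulayShadow ν c = c^{<ν>}`: writing `c = C(k_ν,ν) + ⋯ + C(k_J,J)` in its
(greedily computed) `ν`-th Macaulay representation, this is
`C(k_ν+1,ν+1) + ⋯ + C(k_J+1,J+1)`; by convention `0^{<ν>} = 0`. -/
def macaulayShadow : ℕ → ℕ → ℕ
  | 0, _ => 0
  | ν + 1, c =>
    if c = 0 then 0
    else
      let k := Nat.findGreatest (fun k => Nat.choose k (ν + 1) ≤ c) (c + ν + 1)
      Nat.choose (k + 1) (ν + 2) + macaulayShadow ν (c - Nat.choose k (ν + 1))

/-- The Macaulay function `M_{n,d−1}(k) = C(d+n−1,d) − (C(d+n−2,d−1) − k)^{<d−1>}`. -/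
def macaulayFun (n d k : ℕ) : ℕ :=
  Nat.choose (d + n - 1) d - macaulayShadow (d - 1) (Nat.choose (d + n - 2) (d - 1) - k)

lemma shadow_zero (ν : ℕ) : macaulayShadow ν 0 = 0 := by
  cases ν <;> simp [macaulayShadow]

lemma succ_le_choose_add : ∀ m s : ℕ, s + 1 ≤ m → m + 1 ≤ Nat.choose m (s + 1) + (s + 1) := by
  intro m
  induction m with
  | zero => intro s h; omega
  | succ m ih =>
    intro s h
    rcases Nat.eq_or_lt_of_le h with h' | h'
    · rw [← h', Nat.choose_self]; omega
    · have hr : s + 1 ≤ m := by omega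
      have h1 : 1 ≤ Nat.choose m s := Nat.choose_pos (by omega)
      have h2 := ih s hr
      rw [Nat.choose_succ_succ']
      omega

lemma shadow_step (ν m c : ℕ) (hc : 0 < c) (h1 : Nat.choose m (ν + 1) ≤ c)
    (h2 : c < Nat.choose (m + 1) (ν + 1)) :
    macaulayShadow (ν + 1) c
      = Nat.choose (m + 1) (ν + 2) + macaulayShadow ν (c - Nat.choose m (ν + 1)) := by
  have hm : ν + 1 ≤ m := by
    by_contra hm
    push_neg at hm
    rcases Nat.lt_or_ge (m + 1) (ν + 1) with h | h
    · rw [Nat.choose_eq_zero_of_lt h] at h2; omega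
    · have : m + 1 = ν + 1 := by omega
      rw [this, Nat.choose_self] at h2; omega
  have hle : m ≤ c + ν + 1 := by
    have := succ_le_choose_add m ν hm
    omega
  have hfg : Nat.findGreatest (fun k => Nat.choose k (ν + 1) ≤ c) (c + ν + 1) = m := by
    rw [Nat.findGreatest_eq_iff]
    refine ⟨hle, fun _ => h1, ?_⟩
    intro n hn _
    simp only [not_le]
    calc c < Nat.choose (m + 1) (ν + 1) := h2
      _ ≤ Nat.choose n (ν + 1) := Nat.choose_le_choose _ hn
  conv_lhs => rw [macaulayShadow]
  rw [if_neg hc.ne', hfg]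

lemma shadow_one (c : ℕ) : macaulayShadow 1 c = Nat.choose (c + 1) 2 := by
  rcases Nat.eq_zero_or_pos c with rfl | hc
  · simp [shadow_zero]
  · rw [shadow_step 0 c c hc (by simp) (by simp)]
    simp [shadow_zero]

lemma shadowB : ∀ ν, 1 ≤ ν → ∀ n k, 1 ≤ n → k ≤ n →
    macaulayShadow ν (Nat.choose (ν + n - 1) ν - k) + Nat.choose (n + 1) 2
      = Nat.choose (ν + n) (ν + 1) + Nat.choose (n - k + 1) 2 := by
  intro ν hν
  induction ν, hν using Nat.le_induction with
  | base =>
    intro n k hn hk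
    rw [show 1 + n - 1 = n from by omega, show 1 + n = n + 1 from by omega,
      show (1 : ℕ) + 1 = 2 from rfl, Nat.choose_one_right, shadow_one]
    omega
  | succ ν hν ih =>
    intro n k hn hk
    have hnC : n ≤ Nat.choose (ν + n - 1) ν := by
      have := succ_le_choose_add (ν + n - 1) (ν - 1) (by omega)
      rw [show ν - 1 + 1 = ν from by omega] at this
      omega
    have hx : ν + n - 1 + 1 = ν + n := by omega
    have pascal := Nat.choose_succ_succ' (ν + n - 1) ν
    rw [hx] at pascal
    rw [show ν + 1 + n - 1 = ν + n from by omega, show ν + 1 + n = ν + n + 1 from by omega,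
      show ν + 1 + 1 = ν + 2 from rfl]
    have hp2 : Nat.choose (ν + n + 1) (ν + 2)
        = Nat.choose (ν + n) (ν + 1) + Nat.choose (ν + n) (ν + 2) :=
      Nat.choose_succ_succ' _ _
    rcases Nat.eq_zero_or_pos k with rfl | hkpos
    · simp only [Nat.sub_zero]
      have hcpos : 0 < Nat.choose (ν + n) (ν + 1) := Nat.choose_pos (by omega)
      have hlt : Nat.choose (ν + n) (ν + 1) < Nat.choose (ν + n + 1) (ν + 1) := by
        have h3 := Nat.choose_succ_succ' (ν + n) ν
        have : 0 < Nat.choose (ν + n) ν := Nat.choose_pos (by omega)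
        omega
      rw [shadow_step ν (ν + n) _ hcpos le_rfl hlt, Nat.sub_self, shadow_zero]
      omega
    · set C := Nat.choose (ν + n) (ν + 1) with hC
      rcases Nat.eq_zero_or_pos (C - k) with hc0 | hcpos
      · have hz : Nat.choose (ν + n - 1) (ν + 1) = 0 := by omega
        have hlt2 : ν + n - 1 < ν + 1 := by
          by_contra hcon
          exact absurd hz (Nat.choose_pos (by omega)).ne'
        have hn1 : n = 1 := by omega
        subst hn1
        have hk1 : k = 1 := by omega
        subst hk1
        rw [hc0, shadow_zero]
        simp [Nat.choose_self]
      · have h1 : Nat.choose (ν + n - 1) (ν + 1) ≤ C - k := by omega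
        have h2 : C - k < Nat.choose (ν + n - 1 + 1) (ν + 1) := by rw [hx]; omega
        rw [shadow_step ν (ν + n - 1) _ hcpos h1 h2, hx]
        have hrem : C - k - Nat.choose (ν + n - 1) (ν + 1) = Nat.choose (ν + n - 1) ν - k := by
          omega
        rw [hrem]
        have hIH := ih n k hn hk
        omega

lemma two_mul_choose_two (x : ℕ) : 2 * Nat.choose (x + 1) 2 = x * (x + 1) := by
  induction x with
  | zero => rfl
  | succ x ih =>
    rw [Nat.choose_succ_succ' (x + 1) 1, Nat.choose_one_right, Nat.mul_add, ih]
    ring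

lemma shadowC : ∀ ν, 2 ≤ ν → ∀ n j, 1 ≤ n → j + 1 ≤ n → n + j ≤ Nat.choose (ν + n - 1) ν →
    macaulayShadow ν (Nat.choose (ν + n - 1) ν - (n + j)) + Nat.choose (n + 1) 3
        + Nat.choose (n + 1) 2
      = Nat.choose (ν + n) (ν + 1) + Nat.choose n 3 + Nat.choose (n - j) 2 := by
  intro ν hν
  induction ν, hν using Nat.le_induction with
  | base =>
    intro n j hn hj hnj
    rw [show 2 + n - 1 = n + 1 from by omega, show 2 + n = n + 2 from by omega,
      show (2 : ℕ) + 1 = 3 from rfl] at *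
    have p1 : Nat.choose (n + 1) 2 = n + Nat.choose n 2 := by
      have := Nat.choose_succ_succ' n 1
      rwa [Nat.choose_one_right] at this
    have hc : Nat.choose (n + 1) 2 - (n + j) = Nat.choose n 2 - j := by omega
    rw [hc]
    have p2 : Nat.choose (n + 2) 3 = Nat.choose (n + 1) 2 + Nat.choose (n + 1) 3 :=
      Nat.choose_succ_succ' (n + 1) 2
    have p3 : Nat.choose (n + 1) 3 = Nat.choose n 2 + Nat.choose n 3 :=
      Nat.choose_succ_succ' n 2
    rcases Nat.eq_zero_or_pos j with rfl | hjpos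
    · simp only [Nat.sub_zero]
      rcases Nat.lt_or_ge n 2 with h2 | h2
      · have hn1 : n = 1 := by omega
        subst hn1
        decide
      · have hcpos : 0 < Nat.choose n 2 := Nat.choose_pos h2
        have hlt : Nat.choose n 2 < Nat.choose (n + 1) 2 := by omega
        have hstep := shadow_step 1 n _ hcpos le_rfl hlt
        rw [show (1:ℕ) + 1 = 2 from rfl, show (1:ℕ) + 2 = 3 from rfl] at hstep
        rw [hstep, Nat.sub_self, shadow_zero]
        omega
    · -- j ≥ 1, n ≥ 2
      have hn2 : 2 ≤ n := by omega
      have hy : n - 1 + 1 = n := by omega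
      have p4 : Nat.choose n 2 = n - 1 + Nat.choose (n - 1) 2 := by
        have := Nat.choose_succ_succ' (n - 1) 1
        rwa [hy, Nat.choose_one_right] at this
      rcases Nat.eq_zero_or_pos (Nat.choose n 2 - j) with hc0 | hcpos
      · have hz : Nat.choose (n - 1) 2 = 0 := by omega
        have hlt2 : n - 1 < 2 := by
          by_contra hcon
          exact absurd hz (Nat.choose_pos (by omega)).ne'
        have hn2' : n = 2 := by omega
        subst hn2'
        have hj1 : j = 1 := by omega
        subst hj1
        rw [hc0, shadow_zero]
        decide
      · have h1 : Nat.choose (n - 1) 2 ≤ Nat.choose n 2 - j := by omega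
        have h2 : Nat.choose n 2 - j < Nat.choose (n - 1 + 1) 2 := by rw [hy]; omega
        have hstep := shadow_step 1 (n - 1) _ hcpos h1 h2
        rw [show (1:ℕ) + 1 = 2 from rfl, show (1:ℕ) + 2 = 3 from rfl, hy] at hstep
        rw [hstep, shadow_one]
        have hrem : Nat.choose n 2 - j - Nat.choose (n - 1) 2 + 1 = n - j := by omega
        rw [hrem]
        omega
  | succ ν hν ih =>
    intro n j hn hj hnj
    rw [show ν + 1 + n - 1 = ν + n from by omega, show ν + 1 + n = ν + n + 1 from by omega,
      show ν + 1 + 1 = ν + 2 from rfl] at *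
    have hsym1 : Nat.choose (ν + n - 1) ν = Nat.choose (ν + n - 1) (n - 1) := by
      rw [← Nat.choose_symm (by omega : ν ≤ ν + n - 1), show ν + n - 1 - ν = n - 1 from by omega]
    have hsym2 : Nat.choose (n + 1) (n - 1) = Nat.choose (n + 1) 2 := by
      rw [← Nat.choose_symm (by omega : n - 1 ≤ n + 1), show n + 1 - (n - 1) = 2 from by omega]
    have hmono : Nat.choose (n + 1) (n - 1) ≤ Nat.choose (ν + n - 1) (n - 1) :=
      Nat.choose_le_choose _ (by omega)
    have h2c := two_mul_choose_two n
    have hquad : 2 * (n + j) ≤ n * (n + 1) := by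
      rcases Nat.lt_or_ge n 2 with h | h
      · have : n = 1 := by omega
        subst this
        omega
      · obtain ⟨m, rfl⟩ : ∃ m, n = m + 2 := ⟨n - 2, by omega⟩
        nlinarith
    have hkey : n + j ≤ Nat.choose (ν + n - 1) ν := by omega
    have hx : ν + n - 1 + 1 = ν + n := by omega
    have pascal := Nat.choose_succ_succ' (ν + n - 1) ν
    rw [hx] at pascal
    have hp2 : Nat.choose (ν + n + 1) (ν + 2)
        = Nat.choose (ν + n) (ν + 1) + Nat.choose (ν + n) (ν + 2) :=
      Nat.choose_succ_succ' _ _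
    set C := Nat.choose (ν + n) (ν + 1) with hC
    rcases Nat.eq_zero_or_pos (C - (n + j)) with hc0 | hcpos
    · have hz : Nat.choose (ν + n - 1) (ν + 1) = 0 := by omega
      have hlt2 : ν + n - 1 < ν + 1 := by
        by_contra hcon
        exact absurd hz (Nat.choose_pos (by omega)).ne'
      have hn1 : n = 1 := by omega
      subst hn1
      have hj0 : j = 0 := by omega
      subst hj0
      rw [hc0, shadow_zero]
      simp [Nat.choose_self, Nat.choose_eq_zero_of_lt]
    · have h1 : Nat.choose (ν + n - 1) (ν + 1) ≤ C - (n + j) := by omega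
      have h2 : C - (n + j) < Nat.choose (ν + n - 1 + 1) (ν + 1) := by rw [hx]; omega
      rw [shadow_step ν (ν + n - 1) _ hcpos h1 h2, hx]
      have hrem : C - (n + j) - Nat.choose (ν + n - 1) (ν + 1)
          = Nat.choose (ν + n - 1) ν - (n + j) := by omega
      rw [hrem]
      have hIH := ih n j hn hj hkey
      omega

lemma choose_two_div (x : ℕ) : x * (x + 1) / 2 = Nat.choose (x + 1) 2 := by
  have e : x * (x + 1) = 2 * Nat.choose (x + 1) 2 := (two_mul_choose_two x).symm
  rw [e, Nat.mul_div_cancel_left _ (by norm_num : 0 < 2)]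

lemma arith_a (n k : ℕ) (hk : k ≤ n) :
    Nat.choose (n + 1) 2 - Nat.choose (n - k + 1) 2 = n * k - k * (k - 1) / 2 := by
  obtain ⟨a, rfl⟩ : ∃ a, n = a + k := ⟨n - k, by omega⟩
  rw [show a + k - k = a from by omega]
  rcases k with _ | s
  · simp
  · rw [show s + 1 - 1 = s from rfl, show a + (s + 1) + 1 = a + s + 1 + 1 from by omega,
      show a + (s + 1) = a + s + 1 from by omega, mul_comm (s + 1) s, choose_two_div s]
    have h1 := two_mul_choose_two (a + s + 1)
    have h2 := two_mul_choose_two s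
    have h3 := two_mul_choose_two a
    have hle1 : Nat.choose (a + 1) 2 ≤ Nat.choose (a + s + 1 + 1) 2 :=
      Nat.choose_le_choose _ (by omega)
    have hle2 : Nat.choose (s + 1) 2 ≤ (a + s + 1) * (s + 1) := by nlinarith
    zify [hle1, hle2]
    have hr : ((a : ℤ) + s + 1) * (a + s + 1 + 1) + s * (s + 1)
        = a * (a + 1) + 2 * ((a + s + 1) * (s + 1)) := by ring
    have h1' : (2 : ℤ) * Nat.choose (a + s + 1 + 1) 2 = (a + s + 1) * (a + s + 1 + 1) := by
      exact_mod_cast h1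
    have h2' : (2 : ℤ) * Nat.choose (s + 1) 2 = s * (s + 1) := by exact_mod_cast h2
    have h3' : (2 : ℤ) * Nat.choose (a + 1) 2 = a * (a + 1) := by exact_mod_cast h3
    linarith

lemma key_c (n j : ℕ) (hj : j + 1 ≤ n) :
    Nat.choose n 2 + Nat.choose (j + 1) 2 = Nat.choose (n - j) 2 + n * j := by
  obtain ⟨a, rfl⟩ : ∃ a, n = a + j + 1 := ⟨n - j - 1, by omega⟩
  rw [show a + j + 1 - j = a + 1 from by omega]
  have h1 := two_mul_choose_two (a + j)
  have h2 := two_mul_choose_two j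
  have h3 := two_mul_choose_two a
  have hr : (a + j) * (a + j + 1) + j * (j + 1) = a * (a + 1) + 2 * ((a + j + 1) * j) := by ring
  linarith

/-- **Lemma 3.2: properties of the Macaulay function.**
(a) for `0 ≤ k ≤ n`, `M(k) = nk − k(k−1)/2`;
(b) for `0 ≤ j ≤ n`, `M(n−j) = n(n+1)/2 − j(j+1)/2`;
(c) for `0 ≤ j ≤ n−1` with `n+j ≤ C(n+d−2,d−1)`,
    `M(n+j) = n(n+1)/2 + nj − j(j+1)/2`. -/
theorem macaulayFun_props {n d : ℕ} (hn : 1 ≤ n) (hd : 2 ≤ d) :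
    (∀ k : ℕ, k ≤ n → macaulayFun n d k = n * k - k * (k - 1) / 2) ∧
    (∀ j : ℕ, j ≤ n → macaulayFun n d (n - j) = n * (n + 1) / 2 - j * (j + 1) / 2) ∧
    (∀ j : ℕ, j ≤ n - 1 → n + j ≤ Nat.choose (n + d - 2) (d - 1) →
      macaulayFun n d (n + j) = n * (n + 1) / 2 + n * j - j * (j + 1) / 2) := by
  obtain ⟨e, rfl⟩ : ∃ e, d = e + 2 := ⟨d - 2, by omega⟩
  have hM : ∀ k, macaulayFun n (e + 2) k
      = Nat.choose (n + e + 1) (e + 2)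
        - macaulayShadow (e + 1) (Nat.choose (n + e) (e + 1) - k) := by
    intro k
    simp only [macaulayFun]
    rw [show e + 2 + n - 1 = n + e + 1 from by omega, show e + 2 - 1 = e + 1 from by omega,
      show e + 2 + n - 2 = n + e from by omega]
  have hB : ∀ k, k ≤ n →
      macaulayShadow (e + 1) (Nat.choose (n + e) (e + 1) - k) + Nat.choose (n + 1) 2
        = Nat.choose (n + e + 1) (e + 2) + Nat.choose (n - k + 1) 2 := by
    intro k hk
    have := shadowB (e + 1) (by omega) n k hn hk
    rwa [show e + 1 + n - 1 = n + e from by omega, show e + 1 + n = n + e + 1 from by omega,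
      show e + 1 + 1 = e + 2 from rfl] at this
  refine ⟨?_, ?_, ?_⟩
  · intro k hk
    rw [hM]
    have hB' := hB k hk
    have hle : Nat.choose (n - k + 1) 2 ≤ Nat.choose (n + 1) 2 :=
      Nat.choose_le_choose _ (by omega)
    rw [← arith_a n k hk]
    omega
  · intro j hj
    rw [hM]
    have hB' := hB (n - j) (by omega)
    rw [show n - (n - j) = j from by omega] at hB'
    have hle : Nat.choose (j + 1) 2 ≤ Nat.choose (n + 1) 2 :=
      Nat.choose_le_choose _ (by omega)
    rw [choose_two_div n, choose_two_div j]
    omega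
  · intro j hj hC
    have hj' : j + 1 ≤ n := by omega
    rw [hM, choose_two_div n, choose_two_div j]
    rcases Nat.eq_zero_or_pos e with rfl | hepos
    · -- d = 2 : forces j = 0
      rw [show n + 2 - 2 = n from by omega, show (2 : ℕ) - 1 = 1 from rfl,
        Nat.choose_one_right] at hC
      have hj0 : j = 0 := by omega
      subst hj0
      have hB' := hB n le_rfl
      rw [show n - n = 0 from by omega, show n + 0 = n from by omega] at *
      have h12 : Nat.choose 1 2 = 0 := by decide
      simp only [Nat.mul_zero, Nat.zero_mul, Nat.add_zero, Nat.sub_zero]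
      simp only [show (0 : ℕ) + 2 = 2 from rfl, show (0 : ℕ) + 1 = 1 from rfl] at hB' ⊢
      omega
    · -- e ≥ 1, so ν = e + 1 ≥ 2
      rw [show n + (e + 2) - 2 = n + e from by omega,
        show e + 2 - 1 = e + 1 from by omega] at hC
      have hCC := shadowC (e + 1) (by omega) n j hn hj'
        (by rwa [show e + 1 + n - 1 = n + e from by omega])
      rw [show e + 1 + n - 1 = n + e from by omega, show e + 1 + n = n + e + 1 from by omega,
        show e + 1 + 1 = e + 2 from rfl] at hCC
      have key := key_c n j hj'
      have p3 : Nat.choose (n + 1) 3 = Nat.choose n 2 + Nat.choose n 3 :=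
        Nat.choose_succ_succ' n 2
      have hle : Nat.choose (n - j) 2 ≤ Nat.choose (n + 1) 2 :=
        Nat.choose_le_choose _ (by omega)
      generalize n * j = T at key ⊢
      omega
end

section
/- Let n ≥ 1, d ≥ 1, and let q ∈ ℝ[x₁,…,xₙ] be homogeneous of degree d−1 with exactly P monomials having positive coefficient and exactly N monomials having negative coefficient, where N ≥ 1. If every coefficient of s·q = (x₁+⋯+xₙ)·q is nonnegative, then P ≥ n. -/
open MvPolynomial

/-- **Lemma 3.5 (Halfpap–Lebl).**  Let `q ∈ ℝ[x₁,…,xₙ]` be homogeneous of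
degree `d−1` with exactly `P` monomials of positive coefficient and exactly
`N ≥ 1` monomials of negative coefficient.  If every coefficient of
`(x₁+⋯+xₙ)·q` is nonnegative, then `P ≥ n`. -/
theorem halfpap_lebl_P_ge_n
    {n : ℕ} (hn : 1 ≤ n) {d : ℕ} (hd : 1 ≤ d)
    (q : MvPolynomial (Fin n) ℝ)
    (hq : q.IsHomogeneous (d - 1))
    (P N : ℕ)
    (hP : (q.support.filter fun m => 0 < q.coeff m).card = P)
    (hN : (q.support.filter fun m => q.coeff m < 0).card = N)
    (hN1 : 1 ≤ N)
    (hnonneg : ∀ m : Fin n →₀ ℕ, 0 ≤ ((∑ i, X i) * q).coeff m) :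
    n ≤ P := by
  classical
  have hNpos : (q.support.filter fun m => q.coeff m < 0).Nonempty := by
    rw [← Finset.card_pos, hN]; exact hN1
  obtain ⟨m₀, hm₀⟩ := hNpos
  have hm₀neg : q.coeff m₀ < 0 := (Finset.mem_filter.mp hm₀).2
  have key : ∀ i : Fin n, ∃ j : Fin n, j ≠ i ∧
      Finsupp.single j 1 ≤ m₀ + Finsupp.single i 1 ∧
      0 < q.coeff ((m₀ + Finsupp.single i 1) - Finsupp.single j 1) := by
    intro i
    have h0 := hnonneg (m₀ + Finsupp.single i 1)
    rw [Finset.sum_mul] at h0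
    rw [coeff_sum] at h0
    by_contra hc
    push_neg at hc
    have hterm : ∀ j : Fin n, j ≠ i →
        (X j * q).coeff (m₀ + Finsupp.single i 1) ≤ 0 := by
      intro j hj
      rw [coeff_X_mul']
      split_ifs with hmem
      · have hle : Finsupp.single j 1 ≤ m₀ + Finsupp.single i 1 := by
          rw [Finsupp.single_le_iff]
          exact Nat.one_le_iff_ne_zero.mpr (Finsupp.mem_support_iff.mp hmem)
        exact hc j hj hle
      · exact le_refl 0
    have hi : (X i * q).coeff (m₀ + Finsupp.single i 1) = q.coeff m₀ := by
      rw [add_comm, coeff_X_mul]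
    have hsum : ∑ j : Fin n, (X j * q).coeff (m₀ + Finsupp.single i 1)
        ≤ ∑ j : Fin n, (if j = i then q.coeff m₀ else 0) := by
      apply Finset.sum_le_sum
      intro j _
      by_cases hji : j = i
      · subst hji; simp [hi]
      · simp only [hji, if_false]; exact hterm j hji
    rw [Finset.sum_ite_eq' Finset.univ i (fun _ => q.coeff m₀)] at hsum
    simp only [Finset.mem_univ, if_true] at hsum
    exact absurd (lt_of_le_of_lt (le_trans h0 hsum) hm₀neg) (lt_irrefl 0)
  choose j hjne hjle hjpos using key
  set f : Fin n → (Fin n →₀ ℕ) :=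
    fun i => (m₀ + Finsupp.single i 1) - Finsupp.single (j i) 1 with hf
  have hcancel : ∀ i : Fin n, f i + Finsupp.single (j i) 1 = m₀ + Finsupp.single i 1 :=
    fun i => tsub_add_cancel_of_le (hjle i)
  have hinj : Function.Injective f := by
    intro i i' hii'
    by_contra hne
    have h1 : f i + Finsupp.single (j i) 1 + Finsupp.single (j i') 1
        = f i + Finsupp.single (j i') 1 + Finsupp.single (j i) 1 :=
      add_right_comm _ _ _
    rw [hcancel i] at h1
    rw [hii', hcancel i'] at h1
    have h2 : Finsupp.single i 1 + Finsupp.single (j i') 1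
        = Finsupp.single i' 1 + Finsupp.single (j i) 1 := by
      have h1' : m₀ + (Finsupp.single i 1 + Finsupp.single (j i') 1)
          = m₀ + (Finsupp.single i' 1 + Finsupp.single (j i) 1) := by
        rw [← add_assoc, ← add_assoc]; exact h1
      exact add_left_cancel h1'
    have h3 := DFunLike.congr_fun h2 i
    have hi'i : ¬ (i' = i) := fun h => hne h.symm
    have hjii : ¬ (j i = i) := hjne i
    simp only [Finsupp.add_apply, Finsupp.single_apply, if_pos rfl, if_neg hi'i,
      if_neg hjii] at h3
    split_ifs at h3 <;> omega
  have hsub : Finset.image f Finset.univ ⊆ q.support.filter fun m => 0 < q.coeff m := by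
    intro m hm
    obtain ⟨i, _, rfl⟩ := Finset.mem_image.mp hm
    refine Finset.mem_filter.mpr ⟨Finsupp.mem_support_iff.mpr (ne_of_gt (hjpos i)), hjpos i⟩
  calc n = (Finset.image f Finset.univ).card := by
        rw [Finset.card_image_of_injective _ hinj, Finset.card_univ, Fintype.card_fin]
    _ ≤ _ := Finset.card_le_card hsub
    _ = P := hP
end

section
/- Let n ≥ 2, d ≥ 1, and let q ∈ ℝ[x₁,…,xₙ] be homogeneous of degree d−1 with exactly one monomial having negative coefficient (signature pair (P,1)). Suppose every coefficient of s·q = (x₁+⋯+xₙ)·q is nonnegative. Then the rank satisfies ρ(s·q) ≥ n(n+1)/2 − 1; in particular ρ(s·q) ≥ (k₀+1)n − k₀(k₀+1)/2, where k₀ is the largest integer k ≥ 0 with k(k+1)/2 < n−1. -/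
/-!
Let `μ` be the monomial of `q` with negative coefficient. Nonnegativity of `s·q` at `μ·xᵢ` gives,
for every `i`, some `j ≠ i` with `q` positive at `μ·xᵢ/xⱼ`. For an unordered pair `{a, b}` and such
a `j ∉ {a, b}` arising from `a` or `b`, the coefficient of `s·q` at `μ·xₐx_b/xⱼ` is positive: one
of its terms is such a positive coefficient, and none is the coefficient at `μ`, whose
`xⱼ`-exponent is too large. These monomials are distinct for distinct `({a, b}, j)`. A pair
`{a, b}` without such a `j` is swapped by the relation `i ↦ j`; these pairs are disjoint, and
all of them but one are compensated by pairs with two such `j`, so there are at least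
`n(n+1)/2 - 1` monomials.
-/

open MvPolynomial Finset

theorem Finset.card_filter_ne_zero_add_card_filter_two_le_le_sum {ι : Type*} (s : Finset ι)
    (f : ι → ℕ) : #{i ∈ s | f i ≠ 0} + #{i ∈ s | 2 ≤ f i} ≤ ∑ i ∈ s, f i := by
  rw [card_filter, card_filter, ← sum_add_distrib]
  refine sum_le_sum fun i _ => ?_
  split_ifs <;> omega

theorem MvPolynomial.coeff_sum_X_mul {R σ : Type*} [CommSemiring R] [Fintype σ] [DecidableEq σ]
    (q : MvPolynomial σ R) (m : σ →₀ ℕ) :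
    ((∑ i, X i) * q).coeff m = ∑ i ∈ m.support, q.coeff (m - Finsupp.single i 1) := by
  simp only [sum_mul, coeff_sum, coeff_X_mul', sum_ite_mem, univ_inter]

section Sym2Monomial
variable {σ : Type*} [DecidableEq σ]

noncomputable def sym2Monomial (z : Sym2 σ) : σ →₀ ℕ := Multiset.toFinsupp z.toMultiset

theorem sym2Monomial_mk (a b : σ) :
    sym2Monomial s(a, b) = Finsupp.single a 1 + Finsupp.single b 1 := by
  rw [sym2Monomial, ← Multiset.toFinsupp_singleton, ← Multiset.toFinsupp_singleton,
    ← Multiset.toFinsupp_add]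
  rfl

theorem sym2Monomial_apply_eq_zero {z : Sym2 σ} {j : σ} : sym2Monomial z j = 0 ↔ j ∉ z := by
  rw [sym2Monomial, Multiset.toFinsupp_apply, Multiset.count_eq_zero, Sym2.mem_toMultiset]

theorem sym2Monomial_injective : Function.Injective (sym2Monomial (σ := σ)) := fun z z' h =>
  Sym2.ext fun j => by
    rw [← not_iff_not, ← sym2Monomial_apply_eq_zero, ← sym2Monomial_apply_eq_zero, h]

end Sym2Monomial

section OutsideNeighbors

variable {σ : Type*} [Fintype σ] [DecidableEq σ] (r : σ → σ → Prop) [DecidableRel r]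

def outsideNeighbors (z : Sym2 σ) : Finset σ := {j | j ∉ z ∧ ∃ i ∈ z, r i j}

variable {r}

theorem mem_outsideNeighbors {z : Sym2 σ} {j : σ} :
    j ∈ outsideNeighbors r z ↔ j ∉ z ∧ ∃ i ∈ z, r i j := by
  simp [outsideNeighbors]

theorem eq_of_outsideNeighbors_eq_empty (hirr : ∀ i, ¬ r i i) {z : Sym2 σ}
    (hz : outsideNeighbors r z = ∅) {i j : σ} (hi : i ∈ z) (hij : r i j) : z = s(i, j) := by
  have hj : j ∈ z := by
    by_contra hj
    simpa [hz] using (mem_outsideNeighbors (r := r)).2 ⟨hj, i, hi, hij⟩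
  exact (Sym2.mem_and_mem_iff (by rintro rfl; exact hirr i hij)).1 ⟨hi, hj⟩

theorem eq_of_mem_of_outsideNeighbors_eq_empty (hirr : ∀ i, ¬ r i i) (hex : ∀ i, ∃ j, r i j)
    {z z' : Sym2 σ} (hz : outsideNeighbors r z = ∅) (hz' : outsideNeighbors r z' = ∅) {v : σ}
    (hv : v ∈ z) (hv' : v ∈ z') : z = z' := by
  obtain ⟨w, hvw⟩ := hex v
  rw [eq_of_outsideNeighbors_eq_empty hirr hz hv hvw,
    eq_of_outsideNeighbors_eq_empty hirr hz' hv' hvw]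

theorem card_filter_outsideNeighbors_eq_empty_le (hirr : ∀ i, ¬ r i i) (hex : ∀ i, ∃ j, r i j) :
    #{z | outsideNeighbors r z = ∅} ≤ #{z | 2 ≤ #(outsideNeighbors r z)} + 1 := by
  set bad : Finset (Sym2 σ) := {z | outsideNeighbors r z = ∅}
  rcases bad.eq_empty_or_nonempty with hbad | ⟨z₀, hz₀⟩
  · simp [bad, hbad]
  have hz₀ : outsideNeighbors r z₀ = ∅ := (mem_filter.1 hz₀).2
  obtain ⟨a₀, ha₀⟩ : ∃ a₀, a₀ ∈ z₀ := ⟨_, Sym2.out_fst_mem z₀⟩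
  obtain ⟨b₀, hab₀⟩ := hex a₀
  have hb₀ : b₀ ∈ z₀ := eq_of_outsideNeighbors_eq_empty hirr hz₀ ha₀ hab₀ ▸ Sym2.mem_mk_right _ _
  -- a bad pair `z ≠ z₀` is sent to the pair `s(x, a₀)` for some `x ∈ z`, whose outside neighbours
  -- contain `b₀` and the partner of `x`
  suffices #(bad.erase z₀) ≤ #{z | 2 ≤ #(outsideNeighbors r z)} by
    rw [card_erase_of_mem (by simpa [bad] using hz₀)] at this
    omega
  refine card_le_card_of_injOn (fun z => s((Quot.out z).1, a₀)) ?_ ?_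
  · intro z hz
    obtain ⟨hzz₀, hz⟩ := mem_erase.1 hz
    have hz : outsideNeighbors r z = ∅ := (mem_filter.1 hz).2
    set x := (Quot.out z).1
    have hx : x ∈ z := Sym2.out_fst_mem z
    obtain ⟨y, hxy⟩ := hex x
    have hy : y ∈ z := eq_of_outsideNeighbors_eq_empty hirr hz hx hxy ▸ Sym2.mem_mk_right _ _
    have hne : ∀ {v}, v ∈ z → v ∈ z₀ → False := fun h h₀ =>
      hzz₀ (eq_of_mem_of_outsideNeighbors_eq_empty hirr hex hz hz₀ h h₀)
    have hsub : {y, b₀} ⊆ outsideNeighbors r s(x, a₀) := by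
      intro j hj
      rw [mem_outsideNeighbors, Sym2.mem_iff]
      rcases mem_insert.1 hj with rfl | hj
      · refine ⟨?_, x, Sym2.mem_mk_left _ _, hxy⟩
        rintro (rfl | rfl)
        exacts [hirr _ hxy, hne hy ha₀]
      · rw [mem_singleton.1 hj]
        refine ⟨?_, a₀, Sym2.mem_mk_right _ _, hab₀⟩
        rintro (rfl | rfl)
        exacts [hne hx hb₀, hirr _ hab₀]
    have hyb₀ : y ≠ b₀ := by rintro rfl; exact hne hy hb₀
    simpa [card_pair hyb₀, bad] using card_le_card hsub
  · intro z hz z' hz' hzz'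
    have hz := (mem_filter.1 (mem_of_mem_erase hz)).2
    have hz' := (mem_filter.1 (mem_of_mem_erase hz')).2
    have hx : (Quot.out z).1 = (Quot.out z').1 := Sym2.congr_left.1 hzz'
    exact eq_of_mem_of_outsideNeighbors_eq_empty hirr hex hz hz' (Sym2.out_fst_mem z)
      (hx ▸ Sym2.out_fst_mem z')

theorem card_sym2_sub_one_le_sum_card_outsideNeighbors (hirr : ∀ i, ¬ r i i)
    (hex : ∀ i, ∃ j, r i j) : Fintype.card (Sym2 σ) - 1 ≤ ∑ z, #(outsideNeighbors r z) := by
  have hsplit := card_filter_add_card_filter_not (s := univ)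
    fun z : Sym2 σ => #(outsideNeighbors r z) ≠ 0
  have hsum := card_filter_ne_zero_add_card_filter_two_le_le_sum univ
    fun z => #(outsideNeighbors r z)
  have hbad := card_filter_outsideNeighbors_eq_empty_le hirr hex
  simp only [ne_eq, not_not, card_eq_zero, card_univ] at hsplit hsum
  omega

end OutsideNeighbors

section PosExchange

variable {R σ : Type*} [CommSemiring R] [LinearOrder R] {q : MvPolynomial σ R} {μ : σ →₀ ℕ}

/-- `q` is positive at the monomial `μ·xᵢ/xⱼ`, where `xⱼ` divides `μ·xᵢ`. -/
def IsPosExchange (q : MvPolynomial σ R) (μ : σ →₀ ℕ) (i j : σ) : Prop :=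
  j ∈ (μ + Finsupp.single i 1).support ∧ 0 < q.coeff (μ + Finsupp.single i 1 - Finsupp.single j 1)

noncomputable instance [DecidableEq σ] : DecidableRel (IsPosExchange q μ) := fun _ _ =>
  inferInstanceAs (Decidable (_ ∧ _))

theorem not_isPosExchange_self (hμ : q.coeff μ < 0) (i : σ) : ¬ IsPosExchange q μ i i := by
  rintro ⟨-, hpos⟩
  rw [add_tsub_cancel_right] at hpos
  exact hpos.not_gt hμ

theorem exists_isPosExchange [IsStrictOrderedRing R] [Fintype σ] [DecidableEq σ]
    (hμ : q.coeff μ < 0) (hsq : ∀ m, 0 ≤ ((∑ i, X i) * q).coeff m) (i : σ) :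
    ∃ j, IsPosExchange q μ i j := by
  by_contra! h
  refine (hsq (μ + Finsupp.single i 1)).not_gt ?_
  rw [coeff_sum_X_mul]
  refine sum_neg' (fun j hj => not_lt.1 fun hpos => h j ⟨hj, hpos⟩) ⟨i, ?_, ?_⟩
  · simp
  · rwa [add_tsub_cancel_right]

theorem IsPosExchange.apply_ne_zero {i j : σ} (h : IsPosExchange q μ i j) (hji : j ≠ i) :
    μ j ≠ 0 := by
  simpa [Finsupp.single_eq_of_ne hji] using h.1

theorem coeff_sum_X_mul_pos_of_mem_outsideNeighbors [IsStrictOrderedRing R] [Fintype σ]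
    [DecidableEq σ] (hq : ∀ m ≠ μ, 0 ≤ q.coeff m) {z : Sym2 σ}
    {j : σ} (hj : j ∈ outsideNeighbors (IsPosExchange q μ) z) :
    0 < ((∑ i, X i) * q).coeff (μ + sym2Monomial z - Finsupp.single j 1) := by
  obtain ⟨hjz, i, hi, hij⟩ := mem_outsideNeighbors.1 hj
  obtain ⟨i', rfl⟩ := Sym2.mem_iff_exists.1 hi
  have hμj : μ j ≠ 0 := hij.apply_ne_zero fun h => hjz (h ▸ Sym2.mem_mk_left _ _)
  have hji' : j ≠ i' := fun h => hjz (h ▸ Sym2.mem_mk_right _ _)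
  rw [coeff_sum_X_mul]
  refine sum_pos' (fun t _ => hq _ fun h => ?_) ⟨i', ?_, ?_⟩
  · -- `μ` itself does not occur: its `xⱼ`-exponent is too large
    have := DFunLike.congr_fun h j
    simp [Finsupp.tsub_apply, sym2Monomial_apply_eq_zero.2 hjz] at this
    omega
  · simp [sym2Monomial_mk, Finsupp.single_eq_of_ne' hji']
  · rw [sym2Monomial_mk, ← add_assoc, tsub_tsub, add_tsub_add_eq_tsub_right]
    exact hij.2

theorem add_sym2Monomial_sub_single_injOn [DecidableEq σ] (μ : σ →₀ ℕ) :
    Set.InjOn (fun x : (_ : Sym2 σ) × σ => μ + sym2Monomial x.1 - Finsupp.single x.2 1)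
      {x | x.2 ∉ x.1 ∧ μ x.2 ≠ 0} := by
  rintro ⟨z, j⟩ ⟨hjz, hμj⟩ ⟨z', j'⟩ ⟨-, hμj'⟩ h
  dsimp only at hjz hμj hμj' h
  obtain rfl : j = j' := by
    -- `j` is the only variable whose exponent drops below its exponent in `μ`
    by_contra hne
    have := DFunLike.congr_fun h j
    simp [Finsupp.tsub_apply, sym2Monomial_apply_eq_zero.2 hjz,
      Finsupp.single_eq_of_ne hne] at this
    omega
  have hle : ∀ w : Sym2 σ, Finsupp.single j 1 ≤ μ + sym2Monomial w := fun w =>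
    Finsupp.single_le_iff.2 (by simp; omega)
  rw [tsub_left_inj (hle z) (hle z'), add_right_inj] at h
  rw [sym2Monomial_injective h]

theorem card_sym2_sub_one_le_card_support_sum_X_mul [IsStrictOrderedRing R] [Fintype σ]
    [DecidableEq σ] (hμ : q.coeff μ < 0) (hq : ∀ m ≠ μ, 0 ≤ q.coeff m)
    (hsq : ∀ m, 0 ≤ ((∑ i, X i) * q).coeff m) :
    Fintype.card (Sym2 σ) - 1 ≤ #((∑ i, X i) * q).support := by
  set N := outsideNeighbors (IsPosExchange q μ)
  calc Fintype.card (Sym2 σ) - 1 ≤ ∑ z, #(N z) :=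
        card_sym2_sub_one_le_sum_card_outsideNeighbors (not_isPosExchange_self hμ)
          (exists_isPosExchange hμ hsq)
    _ = #(univ.sigma N) := (card_sigma _ _).symm
    _ ≤ _ := by
      refine card_le_card_of_injOn _ (fun x hx => ?_) ((add_sym2Monomial_sub_single_injOn μ).mono
        fun x hx => ?_)
      · exact mem_support_iff.2 (coeff_sum_X_mul_pos_of_mem_outsideNeighbors hq
          (mem_sigma.1 hx).2).ne'
      · obtain ⟨hjz, i, hi, hij⟩ := mem_outsideNeighbors.1 (mem_sigma.1 hx).2
        exact ⟨hjz, hij.apply_ne_zero fun h => hjz (h ▸ hi)⟩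

end PosExchange

theorem add_one_mul_sub_triangle_le_triangle_sub_one {k n : ℕ} (h : k * (k + 1) / 2 < n - 1) :
    (k + 1) * n - k * (k + 1) / 2 ≤ n * (n + 1) / 2 - 1 := by
  have hk : k + 2 ≤ n := by
    have : k * 2 ≤ k * (k + 1) := by rcases k with _ | k <;> simp
    omega
  have h2k := Nat.div_mul_cancel (Nat.even_mul_succ_self k).two_dvd
  have h2n := Nat.div_mul_cancel (Nat.even_mul_succ_self n).two_dvd
  have key : 2 * ((k + 1) * n) + 2 ≤ n * (n + 1) + k * (k + 1) := by nlinarith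
  omega

theorem sos_one_negative_general
    {n : ℕ} (k₀ : ℕ) (hk₀ : k₀ * (k₀ + 1) / 2 < n - 1)
    (q : MvPolynomial (Fin n) ℝ)
    (hone : (q.support.filter fun m => q.coeff m < 0).card = 1)
    (hnonneg : ∀ m : Fin n →₀ ℕ, 0 ≤ ((∑ i, X i) * q).coeff m) :
    n * (n + 1) / 2 - 1 ≤ ((∑ i, X i) * q).support.card ∧
      (k₀ + 1) * n - k₀ * (k₀ + 1) / 2 ≤ ((∑ i, X i) * q).support.card := by
  obtain ⟨μ, hμ⟩ := card_eq_one.1 hone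
  have hneg : ∀ m, q.coeff m < 0 ↔ m = μ := fun m => by
    rw [← mem_singleton, ← hμ, mem_filter, mem_support_iff]
    exact ⟨fun h => ⟨h.ne, h⟩, And.right⟩
  have hbound := card_sym2_sub_one_le_card_support_sum_X_mul ((hneg μ).2 rfl)
    (fun m hm => not_lt.1 (hm ∘ (hneg m).1)) hnonneg
  rw [Sym2.card, Fintype.card_fin, Nat.choose_two_right, Nat.add_sub_cancel, mul_comm] at hbound
  exact ⟨hbound, (add_one_mul_sub_triangle_le_triangle_sub_one hk₀).trans hbound⟩

/-- **Proposition 3.6: the SOS Conjecture holds for signature pair `(P,1)`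
(diagonal case).**  Let `q ∈ ℝ[x₁,…,xₙ]` (`n ≥ 2`) be homogeneous of degree
`d−1` with exactly one monomial of negative coefficient, and suppose every
coefficient of `s·q = (x₁+⋯+xₙ)·q` is nonnegative.  Then the rank satisfies
`ρ(s·q) ≥ n(n+1)/2 − 1`; in particular `ρ(s·q) ≥ (k₀+1)n − k₀(k₀+1)/2`, where
`k₀` is the largest integer `k ≥ 0` with `k(k+1)/2 < n−1`. -/
theorem sos_one_negative
    {n : ℕ} (hn : 2 ≤ n) {d : ℕ} (hd : 1 ≤ d)
    (k₀ : ℕ) (hk₀ : k₀ * (k₀ + 1) / 2 < n - 1)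
    (hk₀max : ∀ k : ℕ, k * (k + 1) / 2 < n - 1 → k ≤ k₀)
    (q : MvPolynomial (Fin n) ℝ)
    (hq : q.IsHomogeneous (d - 1))
    (hone : (q.support.filter fun m => q.coeff m < 0).card = 1)
    (hnonneg : ∀ m : Fin n →₀ ℕ, 0 ≤ ((∑ i, X i) * q).coeff m) :
    n * (n + 1) / 2 - 1 ≤ ((∑ i, X i) * q).support.card ∧
      (k₀ + 1) * n - k₀ * (k₀ + 1) / 2 ≤ ((∑ i, X i) * q).support.card :=
  sos_one_negative_general k₀ hk₀ q hone hnonneg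
end

section
/- Let d ≥ 2 and let q ∈ ℝ[x₁,x₂,x₃] be homogeneous of degree d−1 whose monomials with negative coefficient are exactly two distinct monomials x^{B¹} and x^{B²}, and which has exactly P monomials with positive coefficient. Suppose every coefficient of s·q = (x₁+x₂+x₃)·q is nonnegative, and suppose the least common multiple of x^{B¹} and x^{B²} has degree at least d+1 (equivalently, the graded Betti number β_{1,d} of the ideal ⟨x^{B¹}, x^{B²}⟩ vanishes). Then P ≥ 5 and ρ(s·q) ≥ 6. -/
/-!
Write `e₀, e₁, e₂` for the unit exponent vectors. If `q_B < 0`, nonnegativity of the coefficient of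
`x^{B+e_k}` in `s·q` forces a positive coefficient `q_w` at some `w = B + e_k - e_i` with `i ≠ k`;
conversely, `x^{w+e_j}` is in the support of `s·q` whenever `q_w > 0` and `w + e_j` is not of the
form `Bʳ + e_l`. Both bounds thereby become counts of points of `ℤ³` which, after translating `B²`
to the origin, depend only on `Δ = B¹ - B²` and on the choices of the `i`. If the translate by `Δ`
of the bounded neighbourhood `nbhd` of the origin misses `nbhd`, the configurations around `B¹` and
`B²` do not interact and each one contributes enough points on its own; otherwise
`Δ ∈ nbhd - nbhd`, which leaves finitely many cases, checked by evaluation.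
-/

open MvPolynomial Finset Pointwise

namespace MvPolynomial

theorem coeff_sum_X_mul_s8 {σ R : Type*} [Fintype σ] [DecidableEq σ] [CommSemiring R]
    (q : MvPolynomial σ R) (m : σ →₀ ℕ) :
    ((∑ i, X i) * q).coeff m = ∑ i ∈ m.support, q.coeff (m - Finsupp.single i 1) := by
  simp only [Finset.sum_mul, coeff_sum, coeff_X_mul', Finset.sum_ite_mem, Finset.univ_inter]

variable {σ R : Type*} [Fintype σ] [DecidableEq σ] [CommRing R] [LinearOrder R]
  [IsStrictOrderedRing R] {q : MvPolynomial σ R}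

theorem exists_pos_coeff_of_coeff_neg (hnonneg : ∀ m, 0 ≤ ((∑ i, X i) * q).coeff m)
    {B : σ →₀ ℕ} (hB : q.coeff B < 0) (k : σ) :
    ∃ i, i ≠ k ∧ ∃ w, 0 < q.coeff w ∧ w + Finsupp.single i 1 = B + Finsupp.single k 1 := by
  set m := B + Finsupp.single k 1
  have hk : k ∈ m.support := by simp [m]
  have hsum := hnonneg m
  rw [coeff_sum_X_mul_s8, ← Finset.add_sum_erase _ _ hk, add_tsub_cancel_right] at hsum
  obtain ⟨i, hi, hpos⟩ : ∃ i ∈ m.support.erase k, 0 < q.coeff (m - Finsupp.single i 1) := by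
    by_contra! h
    linarith [Finset.sum_nonpos h]
  exact ⟨i, ne_of_mem_erase hi, _, hpos,
    Finsupp.sub_add_single_one_cancel (Finsupp.mem_support_iff.mp (mem_of_mem_erase hi))⟩

/-- The coefficient of `x^{w+e_j}` is a sum of coefficients of `q`, none of them negative and the
one at `w` positive. -/
theorem sdiff_subset_support_sum_X_mul (q : MvPolynomial σ R) :
    ({m ∈ q.support | 0 < q.coeff m} + univ.image (Finsupp.single · 1)) \
        ({m ∈ q.support | q.coeff m < 0} + univ.image (Finsupp.single · 1)) ⊆
      ((∑ i, X i) * q).support := by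
  intro m hm
  simp only [mem_sdiff, mem_add, mem_filter, mem_image, mem_univ, true_and] at hm
  obtain ⟨⟨w, ⟨-, hw⟩, _, ⟨j, rfl⟩, rfl⟩, hneg⟩ := hm
  rw [mem_support_iff, coeff_sum_X_mul_s8]
  refine (Finset.sum_pos' (fun i hi => ?_) ⟨j, by simp, by simpa using hw⟩).ne'
  by_contra! h
  exact hneg ⟨_, ⟨mem_support_iff.mpr h.ne, h⟩, _, ⟨i, rfl⟩,
    Finsupp.sub_add_single_one_cancel (Finsupp.mem_support_iff.mp hi)⟩

end MvPolynomial

theorem Finset.mem_sub_or_disjoint_vadd {α : Type*} [AddGroup α] [DecidableEq α]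
    (A B : Finset α) (Δ : α) : Δ ∈ A - B ∨ Disjoint A (Δ +ᵥ B) := by
  refine or_iff_not_imp_right.mpr fun h => ?_
  obtain ⟨x, hxA, hxB⟩ := not_disjoint_iff.mp h
  obtain ⟨b, hb, rfl⟩ := mem_vadd_finset.mp hxB
  exact mem_sub.mpr ⟨_, hxA, b, hb, add_sub_cancel_right Δ b⟩

local notation "ℤ³" => ℤ × ℤ × ℤ

namespace ExponentLattice

def unitVec : Fin 3 → ℤ³ := ![(1, 0, 0), (0, 1, 0), (0, 0, 1)]

def unitVecs : Finset ℤ³ := univ.image unitVec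

def coord (k : Fin 3) (p : ℤ³) : ℤ := ![p.1, p.2.1, p.2.2] k

theorem coord_sub (k : Fin 3) (p p' : ℤ³) : coord k (p - p') = coord k p - coord k p' := by
  fin_cases k <;> rfl

theorem coord_zero (k : Fin 3) : coord k 0 = 0 := by
  fin_cases k <;> rfl

/-- `x^{B₁}` and `x^{B₂}` have the same degree and their least common multiple has degree at least
two more. -/
def Apart (B₁ B₂ : ℤ³) : Prop :=
  ∑ k, coord k B₁ = ∑ k, coord k B₂ ∧ ∑ k, coord k B₂ + 2 ≤ ∑ k, max (coord k B₁) (coord k B₂)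

instance : DecidableRel Apart := fun _ _ => inferInstanceAs (Decidable (_ ∧ _))

theorem Apart.sub {B₁ B₂ : ℤ³} (h : Apart B₁ B₂) : Apart (B₁ - B₂) 0 := by
  obtain ⟨hdeg, hlcm⟩ := h
  have hmax : ∀ k, max (coord k B₁ - coord k B₂) 0 = max (coord k B₁) (coord k B₂) - coord k B₂ :=
    fun k => by rw [← max_sub_sub_right, sub_self]
  simp only [Apart, coord_sub, coord_zero, hmax, sum_sub_distrib, sum_const_zero] at hdeg hlcm ⊢
  constructor <;> linarith

def exchange (B : ℤ³) (i : Fin 3 → Fin 3) : Finset ℤ³ :=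
  univ.image fun k => B + unitVec k - unitVec (i k)

def neighbors (B : ℤ³) : Finset ℤ³ :=
  (univ.filter fun ki : Fin 3 × Fin 3 => ki.1 ≠ ki.2).image
    fun ki => B + unitVec ki.1 - unitVec ki.2

def nbhd : Finset ℤ³ := neighbors 0 + unitVecs

def newShifts (B : ℤ³) (i : Fin 3 → Fin 3) : Finset ℤ³ :=
  (exchange B i + unitVecs) \ (B +ᵥ unitVecs)

theorem exchange_eq_vadd (B : ℤ³) (i : Fin 3 → Fin 3) : exchange B i = B +ᵥ exchange 0 i := by
  simp only [exchange, vadd_finset_def, image_image]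
  congr 1
  funext k
  simp only [Function.comp_apply, vadd_eq_add, zero_add, add_sub_assoc]

theorem newShifts_eq_vadd (B : ℤ³) (i : Fin 3 → Fin 3) : newShifts B i = B +ᵥ newShifts 0 i := by
  rw [newShifts, newShifts, exchange_eq_vadd, vadd_add_assoc, zero_vadd, vadd_finset_sdiff]

theorem exchange_subset_neighbors (B : ℤ³) {i : Fin 3 → Fin 3} (hi : ∀ k, i k ≠ k) :
    exchange B i ⊆ neighbors B := by
  intro p hp
  obtain ⟨k, -, rfl⟩ := mem_image.mp hp
  exact mem_image.mpr ⟨(k, i k), by simpa using (hi k).symm, rfl⟩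

theorem newShifts_zero_subset_nbhd {i : Fin 3 → Fin 3} (hi : ∀ k, i k ≠ k) :
    newShifts 0 i ⊆ nbhd :=
  sdiff_subset.trans (add_subset_add_right (exchange_subset_neighbors 0 hi))

theorem unitVecs_subset_nbhd : unitVecs ⊆ nbhd := by
  decide

variable {i i₁ i₂ : Fin 3 → Fin 3}

theorem card_exchange_zero (hi : ∀ k, i k ≠ k) : #(exchange 0 i) = 3 := by
  revert i
  decide

theorem five_le_card_newShifts_zero (hi : ∀ k, i k ≠ k) : 5 ≤ #(newShifts 0 i) := by
  revert i
  decide +kernel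

theorem five_le_card_exchange_union_of_mem_sub {Δ : ℤ³} (hΔ : Δ ∈ neighbors 0 - neighbors 0)
    (hapart : Apart Δ 0) (hi₁ : ∀ k, i₁ k ≠ k) (hi₂ : ∀ k, i₂ k ≠ k) :
    5 ≤ #(exchange Δ i₁ ∪ exchange 0 i₂) := by
  revert Δ i₁ i₂
  decide +kernel

theorem four_le_card_newShifts_zero_sdiff_of_mem_sub {Δ : ℤ³} (hΔ : Δ ∈ nbhd - nbhd)
    (hapart : Apart Δ 0) (hi : ∀ k, i k ≠ k) : 4 ≤ #(newShifts 0 i \ (Δ +ᵥ unitVecs)) := by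
  revert Δ i
  decide +kernel

theorem two_le_card_newShifts_sdiff_nbhd_of_mem_sub {Δ : ℤ³} (hΔ : Δ ∈ nbhd - nbhd)
    (hapart : Apart Δ 0) (hi : ∀ k, i k ≠ k) : 2 ≤ #(newShifts Δ i \ nbhd) := by
  revert Δ i
  decide +kernel

theorem five_le_card_exchange_union_zero {Δ : ℤ³} (hΔ : Apart Δ 0) (hi₁ : ∀ k, i₁ k ≠ k)
    (hi₂ : ∀ k, i₂ k ≠ k) : 5 ≤ #(exchange Δ i₁ ∪ exchange 0 i₂) := by
  rcases mem_sub_or_disjoint_vadd (neighbors 0) (neighbors 0) Δ with hnear | hfar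
  · exact five_le_card_exchange_union_of_mem_sub hnear hΔ hi₁ hi₂
  · have hdisj : Disjoint (exchange Δ i₁) (exchange 0 i₂) := by
      rw [exchange_eq_vadd Δ]
      exact (hfar.mono (exchange_subset_neighbors 0 hi₂)
        (vadd_finset_subset_vadd_finset (exchange_subset_neighbors 0 hi₁))).symm
    rw [card_union_of_disjoint hdisj, exchange_eq_vadd Δ, card_vadd_finset,
      card_exchange_zero hi₁, card_exchange_zero hi₂]
    norm_num

theorem six_le_card_newShifts_sdiff_add {Δ : ℤ³} (hΔ : Apart Δ 0) (hi₁ : ∀ k, i₁ k ≠ k)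
    (hi₂ : ∀ k, i₂ k ≠ k) :
    6 ≤ #(newShifts 0 i₂ \ (Δ +ᵥ unitVecs)) + #(newShifts Δ i₁ \ nbhd) := by
  rcases mem_sub_or_disjoint_vadd nbhd nbhd Δ with hnear | hfar
  · have := four_le_card_newShifts_zero_sdiff_of_mem_sub hnear hΔ hi₂
    have := two_le_card_newShifts_sdiff_nbhd_of_mem_sub hnear hΔ hi₁
    omega
  · have h₂ : newShifts 0 i₂ \ (Δ +ᵥ unitVecs) = newShifts 0 i₂ :=
      sdiff_eq_self_of_disjoint (hfar.mono (newShifts_zero_subset_nbhd hi₂)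
        (vadd_finset_subset_vadd_finset unitVecs_subset_nbhd))
    have h₁ : newShifts Δ i₁ \ nbhd = newShifts Δ i₁ := by
      rw [newShifts_eq_vadd]
      exact sdiff_eq_self_of_disjoint
        (hfar.mono_right (vadd_finset_subset_vadd_finset (newShifts_zero_subset_nbhd hi₁))).symm
    rw [h₁, h₂, newShifts_eq_vadd Δ, card_vadd_finset]
    have := five_le_card_newShifts_zero hi₁
    have := five_le_card_newShifts_zero hi₂
    omega

theorem newShifts_sdiff_union_subset (Δ : ℤ³) (i₁ i₂ : Fin 3 → Fin 3) :
    newShifts 0 i₂ \ (Δ +ᵥ unitVecs) ∪ newShifts Δ i₁ \ nbhd ⊆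
      (exchange Δ i₁ ∪ exchange 0 i₂ + unitVecs) \ ({Δ, 0} + unitVecs) := by
  intro x hx
  rw [insert_eq, union_add, union_add, singleton_add, singleton_add, zero_vadd]
  simp only [newShifts, zero_vadd, mem_union, mem_sdiff, not_or] at hx ⊢
  rcases hx with ⟨⟨h, h0⟩, hΔ⟩ | ⟨⟨h, hΔ⟩, hn⟩
  · exact ⟨Or.inr h, hΔ, h0⟩
  · exact ⟨Or.inl h, hΔ, fun hu => hn (unitVecs_subset_nbhd hu)⟩

theorem six_le_card_shifts_sdiff_zero {Δ : ℤ³} (hΔ : Apart Δ 0) (hi₁ : ∀ k, i₁ k ≠ k)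
    (hi₂ : ∀ k, i₂ k ≠ k) :
    6 ≤ #((exchange Δ i₁ ∪ exchange 0 i₂ + unitVecs) \ ({Δ, 0} + unitVecs)) := by
  have hdisj : Disjoint (newShifts 0 i₂ \ (Δ +ᵥ unitVecs)) (newShifts Δ i₁ \ nbhd) :=
    disjoint_sdiff.mono_left (sdiff_subset.trans (newShifts_zero_subset_nbhd hi₂))
  calc 6 ≤ #(newShifts 0 i₂ \ (Δ +ᵥ unitVecs)) + #(newShifts Δ i₁ \ nbhd) :=
        six_le_card_newShifts_sdiff_add hΔ hi₁ hi₂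
    _ = #(newShifts 0 i₂ \ (Δ +ᵥ unitVecs) ∪ newShifts Δ i₁ \ nbhd) :=
        (card_union_of_disjoint hdisj).symm
    _ ≤ _ := card_le_card (newShifts_sdiff_union_subset Δ i₁ i₂)

theorem exchange_union_eq_vadd (B₁ B₂ : ℤ³) (i₁ i₂ : Fin 3 → Fin 3) :
    exchange B₁ i₁ ∪ exchange B₂ i₂ = B₂ +ᵥ (exchange (B₁ - B₂) i₁ ∪ exchange 0 i₂) := by
  rw [vadd_finset_union, exchange_eq_vadd B₁, exchange_eq_vadd (B₁ - B₂), vadd_vadd,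
    add_sub_cancel, exchange_eq_vadd B₂]

theorem five_le_card_exchange_union {B₁ B₂ : ℤ³} (h : Apart B₁ B₂) (hi₁ : ∀ k, i₁ k ≠ k)
    (hi₂ : ∀ k, i₂ k ≠ k) : 5 ≤ #(exchange B₁ i₁ ∪ exchange B₂ i₂) := by
  rw [exchange_union_eq_vadd, card_vadd_finset]
  exact five_le_card_exchange_union_zero h.sub hi₁ hi₂

theorem six_le_card_shifts_sdiff {B₁ B₂ : ℤ³} (h : Apart B₁ B₂) (hi₁ : ∀ k, i₁ k ≠ k)
    (hi₂ : ∀ k, i₂ k ≠ k) :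
    6 ≤ #((exchange B₁ i₁ ∪ exchange B₂ i₂ + unitVecs) \ ({B₁, B₂} + unitVecs)) := by
  have hB : ({B₁, B₂} : Finset ℤ³) = B₂ +ᵥ ({B₁ - B₂, 0} : Finset ℤ³) := by
    rw [vadd_finset_insert, vadd_finset_singleton, vadd_eq_add, vadd_eq_add, add_sub_cancel,
      add_zero]
  rw [exchange_union_eq_vadd, hB, vadd_add_assoc, vadd_add_assoc, ← vadd_finset_sdiff,
    card_vadd_finset]
  exact six_le_card_shifts_sdiff_zero h.sub hi₁ hi₂

def toLattice : (Fin 3 →₀ ℕ) →+ ℤ³ where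
  toFun m := (m 0, m 1, m 2)
  map_zero' := by simp
  map_add' m n := by simp

theorem toLattice_injective : Function.Injective toLattice := by
  intro m n h
  simp only [toLattice, AddMonoidHom.coe_mk, ZeroHom.coe_mk, Prod.mk.injEq, Nat.cast_inj] at h
  ext k
  fin_cases k <;> simp [h]

theorem coord_toLattice (k : Fin 3) (m : Fin 3 →₀ ℕ) : coord k (toLattice m) = m k := by
  fin_cases k <;> rfl

theorem toLattice_single (k : Fin 3) : toLattice (Finsupp.single k 1) = unitVec k := by
  fin_cases k <;> simp [toLattice, unitVec]

theorem image_toLattice_single :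
    (univ.image fun k : Fin 3 => Finsupp.single k 1).image toLattice = unitVecs := by
  rw [image_image, unitVecs]
  congr 1
  funext k
  exact toLattice_single k

theorem image_toLattice_eq_exchange {B : Fin 3 →₀ ℕ} {w : Fin 3 → Fin 3 →₀ ℕ} {i : Fin 3 → Fin 3}
    (h : ∀ k, w k + Finsupp.single (i k) 1 = B + Finsupp.single k 1) :
    (univ.image w).image toLattice = exchange (toLattice B) i := by
  rw [image_image, exchange]
  congr 1
  funext k
  have hk := congrArg toLattice (h k)
  rw [map_add, map_add, toLattice_single, toLattice_single] at hk
  exact eq_sub_of_add_eq hk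

end ExponentLattice

open ExponentLattice

theorem MvPolynomial.five_le_card_pos_and_six_le_card_support {R : Type*} [CommRing R]
    [LinearOrder R] [IsStrictOrderedRing R] {q : MvPolynomial (Fin 3) R}
    (hnonneg : ∀ m, 0 ≤ ((∑ i, X i) * q).coeff m) {B₁ B₂ : Fin 3 →₀ ℕ}
    (hneg : {m ∈ q.support | q.coeff m < 0} = {B₁, B₂})
    (hapart : Apart (toLattice B₁) (toLattice B₂)) :
    5 ≤ #{m ∈ q.support | 0 < q.coeff m} ∧ 6 ≤ #((∑ i, X i) * q).support := by
  have hB : ∀ B ∈ ({B₁, B₂} : Finset _), q.coeff B < 0 := fun B hB => by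
    rw [← hneg] at hB
    exact (mem_filter.mp hB).2
  choose i₁ hi₁ w₁ hw₁ hr₁ using exists_pos_coeff_of_coeff_neg hnonneg (hB B₁ (by simp))
  choose i₂ hi₂ w₂ hw₂ hr₂ using exists_pos_coeff_of_coeff_neg hnonneg (hB B₂ (by simp))
  set W := univ.image w₁ ∪ univ.image w₂
  have hWpos : W ⊆ {m ∈ q.support | 0 < q.coeff m} := by
    simp only [W, union_subset_iff, image_subset_iff, mem_filter, mem_support_iff]
    exact ⟨fun k _ => ⟨(hw₁ k).ne', hw₁ k⟩, fun k _ => ⟨(hw₂ k).ne', hw₂ k⟩⟩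
  have hWimage : W.image toLattice = exchange (toLattice B₁) i₁ ∪ exchange (toLattice B₂) i₂ := by
    rw [image_union, image_toLattice_eq_exchange hr₁, image_toLattice_eq_exchange hr₂]
  constructor
  · calc 5 ≤ #(W.image toLattice) := hWimage ▸ five_le_card_exchange_union hapart hi₁ hi₂
      _ ≤ #W := card_image_le
      _ ≤ _ := card_le_card hWpos
  · set E := univ.image fun k : Fin 3 => Finsupp.single k 1
    have hS : ((W + E) \ ({B₁, B₂} + E)).image toLattice =
        (exchange (toLattice B₁) i₁ ∪ exchange (toLattice B₂) i₂ + unitVecs) \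
          ({toLattice B₁, toLattice B₂} + unitVecs) := by
      rw [image_sdiff _ _ toLattice_injective, image_add, image_add, hWimage,
        image_toLattice_single, image_insert, image_singleton]
    calc 6 ≤ #(((W + E) \ ({B₁, B₂} + E)).image toLattice) :=
          hS ▸ six_le_card_shifts_sdiff hapart hi₁ hi₂
      _ ≤ #((W + E) \ ({B₁, B₂} + E)) := card_image_le
      _ ≤ #(({m ∈ q.support | 0 < q.coeff m} + E) \ ({m ∈ q.support | q.coeff m < 0} + E)) :=
          card_le_card (sdiff_subset_sdiff (add_subset_add_right hWpos) (by rw [hneg]))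
      _ ≤ _ := card_le_card (sdiff_subset_support_sum_X_mul q)

theorem sos_two_negatives_high_syzygy_general
    {d : ℕ} (hd : 2 ≤ d)
    (q : MvPolynomial (Fin 3) ℝ)
    (hq : q.IsHomogeneous (d - 1))
    (B1 B2 : Fin 3 →₀ ℕ)
    (hneg : (q.support.filter fun m => q.coeff m < 0) = {B1, B2})
    (P : ℕ)
    (hP : (q.support.filter fun m => 0 < q.coeff m).card = P)
    (hnonneg : ∀ m : Fin 3 →₀ ℕ, 0 ≤ ((X 0 + X 1 + X 2) * q).coeff m)
    (hlcm : d + 1 ≤ ∑ i : Fin 3, max (B1 i) (B2 i)) :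
    5 ≤ P ∧ 6 ≤ ((X 0 + X 1 + X 2) * q).support.card := by
  have hdeg : ∀ B ∈ ({B1, B2} : Finset _), ∑ k, B k = d - 1 := fun B hB => by
    rw [← hneg] at hB
    rw [← Finsupp.degree_eq_sum, Finsupp.degree_apply]
    exact (hq.degree_eq_sum_deg_support (mem_filter.mp hB).1).symm
  have hapart : Apart (toLattice B1) (toLattice B2) := by
    have h₁ := hdeg B1 (by simp)
    have h₂ := hdeg B2 (by simp)
    simp only [Apart, coord_toLattice, ← Nat.cast_max, ← Nat.cast_sum]
    omega
  rw [← Fin.sum_univ_three X] at hnonneg ⊢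
  rw [← hP]
  exact five_le_card_pos_and_six_le_card_support hnonneg hneg hapart

/-- **Proposition 3.7: signature pair `(P,2)` with `β_{1,d} = 0`.**
Let `q ∈ ℝ[x₁,x₂,x₃]` be homogeneous of degree `d−1` whose monomials with
negative coefficient are exactly `x^{B¹} ≠ x^{B²}`, with exactly `P` monomials
of positive coefficient.  Suppose every coefficient of `s·q = (x₁+x₂+x₃)·q`
is nonnegative, and that `deg lcm(x^{B¹}, x^{B²}) = ∑ᵢ max(B¹ᵢ,B²ᵢ) ≥ d+1`
(i.e. `β_{1,d} = 0` for `⟨x^{B¹}, x^{B²}⟩`).  Then `P ≥ 5` and `ρ(s·q) ≥ 6`. -/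
theorem sos_two_negatives_high_syzygy
    {d : ℕ} (hd : 2 ≤ d)
    (q : MvPolynomial (Fin 3) ℝ)
    (hq : q.IsHomogeneous (d - 1))
    (B1 B2 : Fin 3 →₀ ℕ) (hBne : B1 ≠ B2)
    (hneg : (q.support.filter fun m => q.coeff m < 0) = {B1, B2})
    (P : ℕ)
    (hP : (q.support.filter fun m => 0 < q.coeff m).card = P)
    (hnonneg : ∀ m : Fin 3 →₀ ℕ, 0 ≤ ((X 0 + X 1 + X 2) * q).coeff m)
    (hlcm : d + 1 ≤ ∑ i : Fin 3, max (B1 i) (B2 i)) :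
    5 ≤ P ∧ 6 ≤ ((X 0 + X 1 + X 2) * q).support.card :=
  sos_two_negatives_high_syzygy_general hd q hq B1 B2 hneg P hP hnonneg hlcm
end

section
/- Let d ≥ 2 and let q ∈ ℝ[x₁,x₂,x₃] be homogeneous of degree d−1 whose monomials with negative coefficient are exactly two distinct monomials x^{B¹} and x^{B²}, and which has exactly P monomials with positive coefficient. Suppose every coefficient of s·q = (x₁+x₂+x₃)·q is nonnegative, and suppose the least common multiple of x^{B¹} and x^{B²} has degree exactly d (equivalently, the graded Betti number β_{1,d} of the ideal ⟨x^{B¹}, x^{B²}⟩ equals 1). Then P ≥ 4 and ρ(s·q) ≥ 5. -/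
open MvPolynomial

private lemma fin3_cases (i : Fin 3) : i = 0 ∨ i = 1 ∨ i = 2 := by fin_cases i <;> simp

private lemma fin3_third : ∀ j k : Fin 3, j ≠ k →
    ∃ l, j ≠ l ∧ k ≠ l ∧ ∀ i, i = j ∨ i = k ∨ i = l := by decide

private lemma exists_single_one {f g : Fin 3 → ℕ}
    (h : (f 0 - g 0) + (f 1 - g 1) + (f 2 - g 2) = 1) :
    ∃ k, f k = g k + 1 ∧ ∀ i, i ≠ k → f i ≤ g i := by
  by_cases h0 : g 0 < f 0
  · refine ⟨0, by omega, fun i hi => ?_⟩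
    rcases fin3_cases i with rfl | rfl | rfl
    · exact absurd rfl hi
    · omega
    · omega
  · by_cases h1 : g 1 < f 1
    · refine ⟨1, by omega, fun i hi => ?_⟩
      rcases fin3_cases i with rfl | rfl | rfl
      · omega
      · exact absurd rfl hi
      · omega
    · refine ⟨2, by omega, fun i hi => ?_⟩
      rcases fin3_cases i with rfl | rfl | rfl
      · omega
      · omega
      · exact absurd rfl hi

private lemma sum3 {A : Type*} [AddCommMonoid A] {j k l : Fin 3} (hjk : j ≠ k) (hjl : j ≠ l)
    (hkl : k ≠ l) (hcov : ∀ i, i = j ∨ i = k ∨ i = l) (h : Fin 3 → A) :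
    ∑ i, h i = h j + h k + h l := by
  have huniv : (Finset.univ : Finset (Fin 3)) = {j, k, l} := by
    ext i; simpa using hcov i
  rw [huniv, Finset.sum_insert (by simp [hjk, hjl]), Finset.sum_insert (by simp [hkl]),
    Finset.sum_singleton]
  exact (add_assoc _ _ _).symm

private noncomputable def MM (j k l : Fin 3) (a b c : ℕ) : Fin 3 →₀ ℕ :=
  Finsupp.single j a + Finsupp.single k b + Finsupp.single l c

private lemma MM_j {j k l : Fin 3} (hjk : j ≠ k) (hjl : j ≠ l) (a b c : ℕ) :
    MM j k l a b c j = a := by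
  simp [MM, Finsupp.single_apply, Ne.symm hjk, Ne.symm hjl]

private lemma MM_k {j k l : Fin 3} (hjk : j ≠ k) (hkl : k ≠ l) (a b c : ℕ) :
    MM j k l a b c k = b := by
  simp [MM, Finsupp.single_apply, hjk, Ne.symm hkl]

private lemma MM_l {j k l : Fin 3} (hjl : j ≠ l) (hkl : k ≠ l) (a b c : ℕ) :
    MM j k l a b c l = c := by
  simp [MM, Finsupp.single_apply, hjl, hkl]

private lemma MM_sub_j {j k l : Fin 3} (hjk : j ≠ k) (hjl : j ≠ l) (hkl : k ≠ l)
    (hcov : ∀ i, i = j ∨ i = k ∨ i = l) (a b c : ℕ) :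
    MM j k l a b c - Finsupp.single j 1 = MM j k l (a - 1) b c := by
  ext i
  rcases hcov i with rfl | rfl | rfl
  · rw [Finsupp.tsub_apply, MM_j hjk hjl, MM_j hjk hjl, Finsupp.single_apply, if_pos rfl]
  · rw [Finsupp.tsub_apply, MM_k hjk hkl, MM_k hjk hkl, Finsupp.single_apply, if_neg hjk]; omega
  · rw [Finsupp.tsub_apply, MM_l hjl hkl, MM_l hjl hkl, Finsupp.single_apply, if_neg hjl]; omega

private lemma MM_sub_k {j k l : Fin 3} (hjk : j ≠ k) (hjl : j ≠ l) (hkl : k ≠ l)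
    (hcov : ∀ i, i = j ∨ i = k ∨ i = l) (a b c : ℕ) :
    MM j k l a b c - Finsupp.single k 1 = MM j k l a (b - 1) c := by
  ext i
  rcases hcov i with rfl | rfl | rfl
  · rw [Finsupp.tsub_apply, MM_j hjk hjl, MM_j hjk hjl, Finsupp.single_apply,
      if_neg (Ne.symm hjk)]; omega
  · rw [Finsupp.tsub_apply, MM_k hjk hkl, MM_k hjk hkl, Finsupp.single_apply, if_pos rfl]
  · rw [Finsupp.tsub_apply, MM_l hjl hkl, MM_l hjl hkl, Finsupp.single_apply, if_neg hkl]; omega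

private lemma MM_sub_l {j k l : Fin 3} (hjk : j ≠ k) (hjl : j ≠ l) (hkl : k ≠ l)
    (hcov : ∀ i, i = j ∨ i = k ∨ i = l) (a b c : ℕ) :
    MM j k l a b c - Finsupp.single l 1 = MM j k l a b (c - 1) := by
  ext i
  rcases hcov i with rfl | rfl | rfl
  · rw [Finsupp.tsub_apply, MM_j hjk hjl, MM_j hjk hjl, Finsupp.single_apply,
      if_neg (Ne.symm hjl)]; omega
  · rw [Finsupp.tsub_apply, MM_k hjk hkl, MM_k hjk hkl, Finsupp.single_apply,
      if_neg (Ne.symm hkl)]; omega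
  · rw [Finsupp.tsub_apply, MM_l hjl hkl, MM_l hjl hkl, Finsupp.single_apply, if_pos rfl]

private lemma coeff_s_mul (q : MvPolynomial (Fin 3) ℝ) (m : Fin 3 →₀ ℕ) :
    ((X 0 + X 1 + X 2 : MvPolynomial (Fin 3) ℝ) * q).coeff m =
      ∑ i : Fin 3, if m i ≠ 0 then q.coeff (m - Finsupp.single i 1) else 0 := by
  rw [add_mul, add_mul, coeff_add, coeff_add, coeff_X_mul', coeff_X_mul', coeff_X_mul',
    Fin.sum_univ_three]
  simp [Finsupp.mem_support_iff]

private lemma coeff_s_mul_MM (q : MvPolynomial (Fin 3) ℝ) {j k l : Fin 3}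
    (hjk : j ≠ k) (hjl : j ≠ l) (hkl : k ≠ l) (hcov : ∀ i, i = j ∨ i = k ∨ i = l)
    (a b c : ℕ) :
    ((X 0 + X 1 + X 2 : MvPolynomial (Fin 3) ℝ) * q).coeff (MM j k l a b c) =
      (if a ≠ 0 then q.coeff (MM j k l (a - 1) b c) else 0) +
      (if b ≠ 0 then q.coeff (MM j k l a (b - 1) c) else 0) +
      (if c ≠ 0 then q.coeff (MM j k l a b (c - 1)) else 0) := by
  rw [coeff_s_mul, sum3 hjk hjl hkl hcov, MM_sub_j hjk hjl hkl hcov,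
    MM_sub_k hjk hjl hkl hcov, MM_sub_l hjk hjl hkl hcov,
    MM_j hjk hjl, MM_k hjk hkl, MM_l hjl hkl]

private lemma MM_inj {j k l : Fin 3} (hjk : j ≠ k) (hjl : j ≠ l) (hkl : k ≠ l)
    {a b c a' b' c' : ℕ} (h : MM j k l a b c = MM j k l a' b' c') :
    a = a' ∧ b = b' ∧ c = c' := by
  refine ⟨?_, ?_, ?_⟩
  · rw [← MM_j hjk hjl a b c, h, MM_j hjk hjl]
  · rw [← MM_k hjk hkl a b c, h, MM_k hjk hkl]
  · rw [← MM_l hjl hkl a b c, h, MM_l hjl hkl]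

/-- **Proposition 3.8: signature pair `(P,2)` with `β_{1,d} = 1`.**
Let `q ∈ ℝ[x₁,x₂,x₃]` be homogeneous of degree `d−1` whose monomials with
negative coefficient are exactly `x^{B¹} ≠ x^{B²}`, with exactly `P` monomials
of positive coefficient.  Suppose every coefficient of `s·q = (x₁+x₂+x₃)·q`
is nonnegative, and that `deg lcm(x^{B¹}, x^{B²}) = ∑ᵢ max(B¹ᵢ,B²ᵢ) = d`
(i.e. `β_{1,d} = 1` for `⟨x^{B¹}, x^{B²}⟩`).  Then `P ≥ 4` and `ρ(s·q) ≥ 5`. -/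
theorem sos_two_negatives_low_syzygy
    {d : ℕ} (hd : 2 ≤ d)
    (q : MvPolynomial (Fin 3) ℝ)
    (hq : q.IsHomogeneous (d - 1))
    (B1 B2 : Fin 3 →₀ ℕ) (hBne : B1 ≠ B2)
    (hneg : (q.support.filter fun m => q.coeff m < 0) = {B1, B2})
    (P : ℕ)
    (hP : (q.support.filter fun m => 0 < q.coeff m).card = P)
    (hnonneg : ∀ m : Fin 3 →₀ ℕ, 0 ≤ ((X 0 + X 1 + X 2) * q).coeff m)
    (hlcm : ∑ i : Fin 3, max (B1 i) (B2 i) = d) :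
    4 ≤ P ∧ 5 ≤ ((X 0 + X 1 + X 2) * q).support.card := by
  classical
  -- Step 1: sign facts
  have hmem : ∀ m ∈ ({B1, B2} : Finset (Fin 3 →₀ ℕ)), q.coeff m < 0 := by
    intro m hm
    rw [← hneg] at hm
    exact (Finset.mem_filter.mp hm).2
  have hB1 : q.coeff B1 < 0 := hmem B1 (by simp)
  have hB2 : q.coeff B2 < 0 := hmem B2 (by simp)
  have hother : ∀ m, m ≠ B1 → m ≠ B2 → 0 ≤ q.coeff m := by
    intro m h1 h2
    by_contra h
    push_neg at h
    have hm : m ∈ q.support.filter fun m => q.coeff m < 0 :=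
      Finset.mem_filter.mpr ⟨mem_support_iff.mpr h.ne, h⟩
    rw [hneg] at hm
    simp only [Finset.mem_insert, Finset.mem_singleton] at hm
    tauto
  -- Step 2: degrees
  have hdeg : ∀ B : Fin 3 →₀ ℕ, q.coeff B ≠ 0 → ∑ i : Fin 3, B i = d - 1 := by
    intro B hB
    have := hq hB
    rw [← this]
    simp [Finsupp.weight_apply, Finsupp.sum_fintype]
  have hd1 : ∑ i : Fin 3, B1 i = d - 1 := hdeg B1 hB1.ne
  have hd2 : ∑ i : Fin 3, B2 i = d - 1 := hdeg B2 hB2.ne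
  -- Step 3: structure of B1, B2
  have hs2 : (B2 0 - B1 0) + (B2 1 - B1 1) + (B2 2 - B1 2) = 1 := by
    have h := hlcm
    rw [Finset.sum_congr rfl
      (fun i _ => (by omega : max (B1 i) (B2 i) = B1 i + (B2 i - B1 i))),
      Finset.sum_add_distrib, hd1] at h
    rw [← Fin.sum_univ_three (fun i => B2 i - B1 i)]
    omega
  have hs1 : (B1 0 - B2 0) + (B1 1 - B2 1) + (B1 2 - B2 2) = 1 := by
    have h := hlcm
    rw [Finset.sum_congr rfl
      (fun i _ => (by omega : max (B1 i) (B2 i) = B2 i + (B1 i - B2 i))),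
      Finset.sum_add_distrib, hd2] at h
    rw [← Fin.sum_univ_three (fun i => B1 i - B2 i)]
    omega
  obtain ⟨k, hk, hkle⟩ := exists_single_one hs2
  obtain ⟨j, hj, hjle⟩ := exists_single_one hs1
  have hjk : j ≠ k := by
    intro h
    rw [h] at hj
    omega
  obtain ⟨l, hjl, hkl, hcov⟩ := fin3_third j k hjk
  have hBl : B1 l = B2 l := le_antisymm (hjle l (Ne.symm hjl)) (hkle l (Ne.symm hkl))
  set α := B1 j with hα
  set β := B1 k with hβ
  set γ := B1 l with hγdef
  have hα1 : 1 ≤ α := by omega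
  -- identify B1, B2 as MM monomials
  have hB1M : B1 = MM j k l α β γ := by
    ext i
    rcases hcov i with rfl | rfl | rfl
    · rw [MM_j hjk hjl]
    · rw [MM_k hjk hkl]
    · rw [MM_l hjl hkl]
  have hB2M : B2 = MM j k l (α - 1) (β + 1) γ := by
    ext i
    rcases hcov i with rfl | rfl | rfl
    · rw [MM_j hjk hjl]; omega
    · rw [MM_k hjk hkl]; omega
    · rw [MM_l hjl hkl]; omega
  have hB1neg : q.coeff (MM j k l α β γ) < 0 := by rw [← hB1M]; exact hB1
  have hB2neg : q.coeff (MM j k l (α - 1) (β + 1) γ) < 0 := by rw [← hB2M]; exact hB2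
  have hge : ∀ a b c : ℕ, ¬(a = α ∧ b = β ∧ c = γ) → ¬(a = α - 1 ∧ b = β + 1 ∧ c = γ) →
      0 ≤ q.coeff (MM j k l a b c) := by
    intro a b c h1 h2
    refine hother _ (fun h => h1 ?_) (fun h => h2 ?_)
    · rw [hB1M] at h
      exact MM_inj hjk hjl hkl h
    · rw [hB2M] at h
      exact MM_inj hjk hjl hkl h
  have hcoeff := coeff_s_mul_MM q hjk hjl hkl hcov
  -- Fact A: monomial B1 + e_k (the lcm)
  have hA := hnonneg (MM j k l α (β + 1) γ)
  rw [hcoeff, if_pos (by omega : α ≠ 0), if_pos (by omega : β + 1 ≠ 0),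
    Nat.add_sub_cancel] at hA
  have hγ1 : γ ≠ 0 := by
    intro h0
    rw [if_neg (by omega : ¬ γ ≠ 0)] at hA
    linarith
  rw [if_pos hγ1] at hA
  have hP0 : 0 < q.coeff (MM j k l α (β + 1) (γ - 1)) := by linarith
  -- Fact B: monomial B1 + e_j
  have hB := hnonneg (MM j k l (α + 1) β γ)
  rw [hcoeff, if_pos (by omega : α + 1 ≠ 0), Nat.add_sub_cancel, if_pos hγ1] at hB
  obtain ⟨b1, c1, hb1, hc1, hp1⟩ :
      ∃ b c', b ≤ β ∧ c' ≤ γ ∧ 0 < q.coeff (MM j k l (α + 1) b c') := by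
    by_cases h1 : 0 < q.coeff (MM j k l (α + 1) (β - 1) γ)
    · exact ⟨β - 1, γ, by omega, le_rfl, h1⟩
    · refine ⟨β, γ - 1, le_rfl, by omega, ?_⟩
      push_neg at h1
      have t1 : (if β ≠ 0 then q.coeff (MM j k l (α + 1) (β - 1) γ) else 0) ≤ 0 := by
        split_ifs
        · exact h1
        · exact le_rfl
      linarith
  -- Fact C: monomial B1 + e_l
  have hC := hnonneg (MM j k l α β (γ + 1))
  rw [hcoeff, if_pos (by omega : α ≠ 0), if_pos (by omega : γ + 1 ≠ 0),
    Nat.add_sub_cancel] at hC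
  obtain ⟨a2, b2, ha2, hb2, hp2⟩ :
      ∃ a b, a ≤ α ∧ b ≤ β ∧ 0 < q.coeff (MM j k l a b (γ + 1)) := by
    by_cases h1 : 0 < q.coeff (MM j k l (α - 1) β (γ + 1))
    · exact ⟨α - 1, β, by omega, le_rfl, h1⟩
    · refine ⟨α, β - 1, le_rfl, by omega, ?_⟩
      push_neg at h1
      have t1 : (if β ≠ 0 then q.coeff (MM j k l α (β - 1) (γ + 1)) else 0) > 0 := by
        linarith
      by_cases hb : β ≠ 0
      · rw [if_pos hb] at t1
        exact t1
      · rw [if_neg hb] at t1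
        exact absurd t1 (lt_irrefl 0)
  -- Fact D: monomial B2 + e_k
  have hD := hnonneg (MM j k l (α - 1) (β + 2) γ)
  rw [hcoeff, if_pos (by omega : β + 2 ≠ 0), if_pos hγ1,
    (by omega : β + 2 - 1 = β + 1), (by omega : α - 1 - 1 = α - 2)] at hD
  obtain ⟨a3, c3, hp3⟩ : ∃ a cc, 0 < q.coeff (MM j k l a (β + 2) cc) := by
    by_cases h1 : 0 < q.coeff (MM j k l (α - 2) (β + 2) γ)
    · exact ⟨_, _, h1⟩
    · refine ⟨α - 1, γ - 1, ?_⟩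
      push_neg at h1
      have t1 : (if α - 1 ≠ 0 then q.coeff (MM j k l (α - 2) (β + 2) γ) else 0) ≤ 0 := by
        split_ifs
        · exact h1
        · exact le_rfl
      linarith
  -- auxiliary: inequality of MM monomials from a single coordinate
  have hMne1 : ∀ {a b c a' b' c' : ℕ}, a ≠ a' → MM j k l a b c ≠ MM j k l a' b' c' :=
    fun h h' => h (MM_inj hjk hjl hkl h').1
  have hMne2 : ∀ {a b c a' b' c' : ℕ}, b ≠ b' → MM j k l a b c ≠ MM j k l a' b' c' :=
    fun h h' => h (MM_inj hjk hjl hkl h').2.1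
  have hMne3 : ∀ {a b c a' b' c' : ℕ}, c ≠ c' → MM j k l a b c ≠ MM j k l a' b' c' :=
    fun h h' => h (MM_inj hjk hjl hkl h').2.2
  constructor
  · -- P ≥ 4
    rw [← hP]
    have hsub : ({MM j k l α (β + 1) (γ - 1), MM j k l (α + 1) b1 c1,
        MM j k l a2 b2 (γ + 1), MM j k l a3 (β + 2) c3} : Finset (Fin 3 →₀ ℕ))
        ⊆ q.support.filter fun m => 0 < q.coeff m := by
      intro m hm
      simp only [Finset.mem_insert, Finset.mem_singleton] at hm
      rcases hm with rfl | rfl | rfl | rfl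
      · exact Finset.mem_filter.mpr ⟨mem_support_iff.mpr (ne_of_gt hP0), hP0⟩
      · exact Finset.mem_filter.mpr ⟨mem_support_iff.mpr (ne_of_gt hp1), hp1⟩
      · exact Finset.mem_filter.mpr ⟨mem_support_iff.mpr (ne_of_gt hp2), hp2⟩
      · exact Finset.mem_filter.mpr ⟨mem_support_iff.mpr (ne_of_gt hp3), hp3⟩
    refine le_trans (le_of_eq ?_) (Finset.card_le_card hsub)
    rw [Finset.card_insert_of_notMem, Finset.card_insert_of_notMem,
      Finset.card_insert_of_notMem, Finset.card_singleton]
    · simp only [Finset.mem_singleton]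
      exact hMne2 (by omega)
    · simp only [Finset.mem_insert, Finset.mem_singleton]
      push_neg
      exact ⟨hMne1 (by omega), hMne2 (by omega)⟩
    · simp only [Finset.mem_insert, Finset.mem_singleton]
      push_neg
      exact ⟨hMne1 (by omega), hMne3 (by omega), hMne2 (by omega)⟩
  · -- support of s*q has at least 5 elements
    -- five support monomials
    have hT1 : 0 < ((X 0 + X 1 + X 2) * q).coeff (MM j k l α (β + 2) (γ - 1)) := by
      rw [hcoeff, (by omega : β + 2 - 1 = β + 1), if_pos (by omega : β + 2 ≠ 0)]
      have t1 : (0:ℝ) ≤ if α ≠ 0 then q.coeff (MM j k l (α - 1) (β + 2) (γ - 1)) else 0 := by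
        split_ifs
        · exact hge _ _ _ (by omega) (by omega)
        · exact le_rfl
      have t3 : (0:ℝ) ≤ if γ - 1 ≠ 0 then q.coeff (MM j k l α (β + 2) (γ - 1 - 1)) else 0 := by
        split_ifs
        · exact hge _ _ _ (by omega) (by omega)
        · exact le_rfl
      linarith
    have hT2 : 0 < ((X 0 + X 1 + X 2) * q).coeff (MM j k l (α + 2) b1 c1) := by
      rw [hcoeff, (by omega : α + 2 - 1 = α + 1), if_pos (by omega : α + 2 ≠ 0)]
      have t2 : (0:ℝ) ≤ if b1 ≠ 0 then q.coeff (MM j k l (α + 2) (b1 - 1) c1) else 0 := by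
        split_ifs
        · exact hge _ _ _ (by omega) (by omega)
        · exact le_rfl
      have t3 : (0:ℝ) ≤ if c1 ≠ 0 then q.coeff (MM j k l (α + 2) b1 (c1 - 1)) else 0 := by
        split_ifs
        · exact hge _ _ _ (by omega) (by omega)
        · exact le_rfl
      linarith
    have hT3 : 0 < ((X 0 + X 1 + X 2) * q).coeff (MM j k l a2 b2 (γ + 2)) := by
      rw [hcoeff, (by omega : γ + 2 - 1 = γ + 1), if_pos (by omega : γ + 2 ≠ 0)]
      have t1 : (0:ℝ) ≤ if a2 ≠ 0 then q.coeff (MM j k l (a2 - 1) b2 (γ + 2)) else 0 := by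
        split_ifs
        · exact hge _ _ _ (by omega) (by omega)
        · exact le_rfl
      have t2 : (0:ℝ) ≤ if b2 ≠ 0 then q.coeff (MM j k l a2 (b2 - 1) (γ + 2)) else 0 := by
        split_ifs
        · exact hge _ _ _ (by omega) (by omega)
        · exact le_rfl
      linarith
    have hT4 : 0 < ((X 0 + X 1 + X 2) * q).coeff (MM j k l a3 (β + 3) c3) := by
      rw [hcoeff, (by omega : β + 3 - 1 = β + 2), if_pos (by omega : β + 3 ≠ 0)]
      have t1 : (0:ℝ) ≤ if a3 ≠ 0 then q.coeff (MM j k l (a3 - 1) (β + 3) c3) else 0 := by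
        split_ifs
        · exact hge _ _ _ (by omega) (by omega)
        · exact le_rfl
      have t3 : (0:ℝ) ≤ if c3 ≠ 0 then q.coeff (MM j k l a3 (β + 3) (c3 - 1)) else 0 := by
        split_ifs
        · exact hge _ _ _ (by omega) (by omega)
        · exact le_rfl
      linarith
    have hT5 : 0 < ((X 0 + X 1 + X 2) * q).coeff (MM j k l (α + 1) (β + 1) (γ - 1)) := by
      rw [hcoeff, Nat.add_sub_cancel, if_pos (by omega : α + 1 ≠ 0)]
      have t2 : (0:ℝ) ≤ if β + 1 ≠ 0 then q.coeff (MM j k l (α + 1) (β + 1 - 1) (γ - 1)) else 0 := by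
        split_ifs
        · exact hge _ _ _ (by omega) (by omega)
        · exact le_rfl
      have t3 : (0:ℝ) ≤ if γ - 1 ≠ 0 then q.coeff (MM j k l (α + 1) (β + 1) (γ - 1 - 1)) else 0 := by
        split_ifs
        · exact hge _ _ _ (by omega) (by omega)
        · exact le_rfl
      linarith
    have hsub : ({MM j k l α (β + 2) (γ - 1), MM j k l (α + 2) b1 c1,
        MM j k l a2 b2 (γ + 2), MM j k l a3 (β + 3) c3,
        MM j k l (α + 1) (β + 1) (γ - 1)} : Finset (Fin 3 →₀ ℕ))
        ⊆ ((X 0 + X 1 + X 2) * q).support := by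
      intro m hm
      simp only [Finset.mem_insert, Finset.mem_singleton] at hm
      rcases hm with rfl | rfl | rfl | rfl | rfl
      · exact mem_support_iff.mpr (ne_of_gt hT1)
      · exact mem_support_iff.mpr (ne_of_gt hT2)
      · exact mem_support_iff.mpr (ne_of_gt hT3)
      · exact mem_support_iff.mpr (ne_of_gt hT4)
      · exact mem_support_iff.mpr (ne_of_gt hT5)
    refine le_trans (le_of_eq ?_) (Finset.card_le_card hsub)
    rw [Finset.card_insert_of_notMem, Finset.card_insert_of_notMem,
      Finset.card_insert_of_notMem, Finset.card_insert_of_notMem, Finset.card_singleton]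
    · simp only [Finset.mem_singleton]
      exact hMne2 (by omega)
    · simp only [Finset.mem_insert, Finset.mem_singleton]
      push_neg
      exact ⟨hMne2 (by omega), hMne3 (by omega)⟩
    · simp only [Finset.mem_insert, Finset.mem_singleton]
      push_neg
      exact ⟨hMne1 (by omega), hMne2 (by omega), hMne1 (by omega)⟩
    · simp only [Finset.mem_insert, Finset.mem_singleton]
      push_neg
      exact ⟨hMne1 (by omega), hMne3 (by omega), hMne2 (by omega), hMne1 (by omega)⟩
end

section
/- Let n ≥ 1, d ≥ 1, and let q₁, q₂ ∈ ℝ[x₁,…,xₙ] be homogeneous of degree d−1 with disjoint supports, such that no multi-index a in the support of q₁ and multi-index b in the support of q₂ satisfy a + eⱼ = b + eₖ for any indices j,k (i.e., no vertex of supp q₁ is adjacent to a vertex of supp q₂ in a Newton-diagram graph). Then the supports of s·q₁ and s·q₂ are disjoint, and consequently ρ(s·(q₁+q₂)) = ρ(s·q₁) + ρ(s·q₂). -/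
open MvPolynomial

/-- **Additivity of rank over Newton-diagram components.**  If `q₁`, `q₂` are
homogeneous of degree `d−1` with disjoint supports and no exponent of `q₁` is
adjacent to an exponent of `q₂` (no `a + eⱼ = b + eₖ`), then `s·q₁` and `s·q₂`
have disjoint supports, so `ρ(s·(q₁+q₂)) = ρ(s·q₁) + ρ(s·q₂)`. -/
theorem rank_additive_over_components
    {n : ℕ} (hn : 1 ≤ n) {d : ℕ} (hd : 1 ≤ d)
    (q₁ q₂ : MvPolynomial (Fin n) ℝ)
    (hq₁ : q₁.IsHomogeneous (d - 1)) (hq₂ : q₂.IsHomogeneous (d - 1))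
    (hsupp : Disjoint q₁.support q₂.support)
    (hadj : ∀ a ∈ q₁.support, ∀ b ∈ q₂.support, ∀ j k : Fin n,
      a + Finsupp.single j 1 ≠ b + Finsupp.single k 1) :
    Disjoint ((∑ i, X i) * q₁).support ((∑ i, X i) * q₂).support ∧
      ((∑ i, X i) * (q₁ + q₂)).support.card
        = ((∑ i, X i) * q₁).support.card + ((∑ i, X i) * q₂).support.card := by
  have hs : ((∑ i, X i : MvPolynomial (Fin n) ℝ)).support ⊆
      Finset.univ.image (fun j : Fin n => Finsupp.single j 1) := by
    refine support_sum.trans ?_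
    intro c hc
    simp only [Finset.mem_biUnion, support_X, Finset.mem_singleton] at hc
    obtain ⟨j, _, rfl⟩ := hc
    exact Finset.mem_image_of_mem _ (Finset.mem_univ j)
  have hdisj : Disjoint ((∑ i, X i) * q₁).support ((∑ i, X i) * q₂).support := by
    rw [Finset.disjoint_left]
    intro c hc1 hc2
    have h1 := support_mul _ _ hc1
    have h2 := support_mul _ _ hc2
    rw [Finset.mem_add] at h1 h2
    obtain ⟨u, hu, a, ha, rfl⟩ := h1
    obtain ⟨v, hv, b, hb, hvb⟩ := h2
    have hu' := hs hu
    have hv' := hs hv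
    simp only [Finset.mem_image, Finset.mem_univ, true_and] at hu' hv'
    obtain ⟨j, rfl⟩ := hu'
    obtain ⟨k, rfl⟩ := hv'
    refine hadj a ha b hb j k ?_
    rw [add_comm a, add_comm b]
    exact hvb.symm
  refine ⟨hdisj, ?_⟩
  rw [mul_add]
  have hse : (((∑ i, X i) * q₁ + (∑ i : Fin n, X i) * q₂)).support
      = ((∑ i, X i) * q₁).support ∪ ((∑ i, X i) * q₂).support := by
    ext m
    simp only [Finset.mem_union, mem_support_iff, coeff_add]
    constructor
    · intro h
      by_contra hc
      push_neg at hc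
      rw [hc.1, hc.2, add_zero] at h
      exact h rfl
    · intro h
      rcases h with h | h
      · have : coeff m ((∑ i, X i) * q₂) = 0 := by
          by_contra hc
          exact Finset.disjoint_left.mp hdisj (mem_support_iff.mpr h) (mem_support_iff.mpr hc)
        rw [this, add_zero]; exact h
      · have : coeff m ((∑ i, X i) * q₁) = 0 := by
          by_contra hc
          exact Finset.disjoint_left.mp hdisj (mem_support_iff.mpr hc) (mem_support_iff.mpr h)
        rw [this, zero_add]; exact h
  rw [hse]
  exact Finset.card_union_of_disjoint hdisj
end

section
/- Let d ≥ 2 and let ε be any function from the set of multi-indices of degree d−1 in three variables to {+1, −1}. For a multi-index A of degree d, say A ∈ T⁰ if all three components of A are positive and ε is not constant on {A−e₁, A−e₂, A−e₃}; say A ∈ E⁰ if exactly one component of A is zero and, writing j, k for the two indices with positive components, ε(A−eⱼ) ≠ ε(A−eₖ). Then |E⁰| + 2·|T⁰| ≤ d² − d. -/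
/-!
Double counting of divided Koszul relations. For a multi-index `A`, `signChanges ε A` is the set
of ordered pairs `(j, k)` such that `A - e j` and `A - e k` exist and carry different signs.
Writing `A = b + e j + e k`, these pairs over all `A` of degree `d` correspond to the pairs
`(b, (j, k))` with `deg b = d - 2` and `ε (b + e j) ≠ ε (b + e k)`. Three values in `{1, -1}`
cannot be pairwise distinct, so each `b` contributes at most four ordered pairs, at most
`4 * (d choose 2)` in total. An index of `E⁰` contributes at least the two orderings of its pair,
and one of `T⁰`, where `ε` is not constant on three values, at least four.
-/

open Finset Finsupp

variable {σ α : Type*} [DecidableEq α]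

lemma add_single_add_single_sub_single_left (b : σ →₀ ℕ) (j k : σ) :
    b + single j 1 + single k 1 - single j 1 = b + single k 1 := by
  rw [add_right_comm, add_tsub_cancel_right]

lemma exists_eq_add_single_add_single [DecidableEq σ] {A : σ →₀ ℕ} {j k : σ} (hjk : j ≠ k)
    (hj : 0 < A j) (hk : 0 < A k) : ∃ b, A = b + single j 1 + single k 1 := by
  refine ⟨A - single j 1 - single k 1, ?_⟩
  ext i
  simp only [Finsupp.coe_add, Finsupp.coe_tsub, Pi.add_apply, Pi.sub_apply, single_apply]
  split_ifs <;> subst_vars <;> first | omega | exact absurd rfl hjk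

lemma mul_card_add_mul_card_le_sum {ι : Type*} [DecidableEq ι] {s t u : Finset ι} {f : ι → ℕ}
    {a b : ℕ} (hst : Disjoint s t) (hsu : s ⊆ u) (htu : t ⊆ u) (hs : ∀ i ∈ s, a ≤ f i)
    (ht : ∀ i ∈ t, b ≤ f i) : a * #s + b * #t ≤ ∑ i ∈ u, f i :=
  calc a * #s + b * #t = ∑ i ∈ s, a + ∑ i ∈ t, b := by simp [mul_comm]
    _ ≤ ∑ i ∈ s, f i + ∑ i ∈ t, f i := add_le_add (sum_le_sum hs) (sum_le_sum ht)
    _ = ∑ i ∈ s ∪ t, f i := (sum_union hst).symm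
    _ ≤ ∑ i ∈ u, f i := sum_le_sum_of_subset (union_subset hsu htu)

section
variable [Fintype σ]

noncomputable def signChanges (ε : (σ →₀ ℕ) → α) (A : σ →₀ ℕ) : Finset (σ × σ) :=
  {p | 0 < A p.1 ∧ 0 < A p.2 ∧ ε (A - single p.1 1) ≠ ε (A - single p.2 1)}

lemma two_le_card_signChanges {ε : (σ →₀ ℕ) → α} {A : σ →₀ ℕ} {j k : σ} (hjk : j ≠ k)
    (hj : 0 < A j) (hk : 0 < A k) (hne : ε (A - single j 1) ≠ ε (A - single k 1)) :
    2 ≤ #(signChanges ε A) := by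
  refine one_lt_card_iff.2 ⟨(j, k), (k, j), ?_, ?_, by simp [hjk]⟩ <;>
    simp [signChanges, hj, hk, hne, hne.symm]

variable [DecidableEq σ]

lemma mem_finsuppAntidiag_univ {m : ℕ} {A : σ →₀ ℕ} :
    A ∈ finsuppAntidiag univ m ↔ A.degree = m := by
  simp [degree_eq_sum]

lemma setOf_degree_eq_and (m : ℕ) (P : (σ →₀ ℕ) → Prop) [DecidablePred P] :
    {A : σ →₀ ℕ | A.degree = m ∧ P A} = ↑({A ∈ finsuppAntidiag (univ : Finset σ) m | P A}) := by
  ext A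
  rw [coe_filter]
  simp_rw [mem_finsuppAntidiag_univ]

lemma card_filter_sub_single_ne (ε : (σ →₀ ℕ) → α) (m : ℕ) (j k : σ) :
    #{A ∈ finsuppAntidiag univ (m + 2) |
        0 < A j ∧ 0 < A k ∧ ε (A - single j 1) ≠ ε (A - single k 1)} =
      #{b ∈ finsuppAntidiag univ m | ε (b + single j 1) ≠ ε (b + single k 1)} := by
  refine (card_nbij' (fun b => b + single j 1 + single k 1)
    (fun A => A - single j 1 - single k 1) ?_ ?_ ?_ ?_).symm
  · intro b hb
    simp only [coe_filter, Set.mem_ofPred_eq, mem_finsuppAntidiag_univ] at hb ⊢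
    refine ⟨by simp [hb.1], by simp, by simp, ?_⟩
    rw [add_single_add_single_sub_single_left, add_tsub_cancel_right]
    exact hb.2.symm
  · intro A hA
    simp only [coe_filter, Set.mem_ofPred_eq, mem_finsuppAntidiag_univ] at hA ⊢
    obtain ⟨hdeg, hj, hk, hne⟩ := hA
    have hjk : j ≠ k := by rintro rfl; exact hne rfl
    obtain ⟨b, rfl⟩ := exists_eq_add_single_add_single hjk hj hk
    rw [add_single_add_single_sub_single_left, add_tsub_cancel_right] at hne ⊢
    simp only [map_add, degree_single] at hdeg
    exact ⟨by omega, hne.symm⟩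
  · intro b _
    simp only [add_single_add_single_sub_single_left, add_tsub_cancel_right]
  · intro A hA
    simp only [coe_filter, Set.mem_ofPred_eq] at hA
    obtain ⟨-, hj, hk, hne⟩ := hA
    have hjk : j ≠ k := by rintro rfl; exact hne rfl
    obtain ⟨b, rfl⟩ := exists_eq_add_single_add_single hjk hj hk
    simp only [add_single_add_single_sub_single_left, add_tsub_cancel_right]

theorem sum_card_signChanges (ε : (σ →₀ ℕ) → α) (m : ℕ) :
    ∑ A ∈ finsuppAntidiag univ (m + 2), #(signChanges ε A) =
      ∑ b ∈ finsuppAntidiag univ m,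
        #{p : σ × σ | ε (b + single p.1 1) ≠ ε (b + single p.2 1)} := by
  simp only [signChanges, card_filter]
  rw [Finset.sum_comm, Finset.sum_comm (s := finsuppAntidiag univ m)]
  refine sum_congr rfl fun p _ => ?_
  rw [← card_filter, ← card_filter]
  exact card_filter_sub_single_ne ε m p.1 p.2

end

lemma card_filter_ne_fin_three (s : Fin 3 → α) :
    #{p : Fin 3 × Fin 3 | s p.1 ≠ s p.2} =
      2 * ((if s 0 = s 1 then 0 else 1) + (if s 0 = s 2 then 0 else 1) +
        (if s 1 = s 2 then 0 else 1)) := by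
  rw [card_filter, Fintype.sum_prod_type]
  simp only [Fin.sum_univ_three, ne_eq, ite_not, eq_comm (a := s 1) (b := s 0),
    eq_comm (a := s 2) (b := s 0), eq_comm (a := s 2) (b := s 1)]
  split_ifs <;> rfl

lemma card_filter_ne_fin_three_le_four {s : Fin 3 → α} {x y : α} (h : ∀ j, s j = x ∨ s j = y) :
    #{p : Fin 3 × Fin 3 | s p.1 ≠ s p.2} ≤ 4 := by
  rw [card_filter_ne_fin_three]
  rcases h 0 with h0 | h0 <;> rcases h 1 with h1 | h1 <;> rcases h 2 with h2 | h2 <;>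
    simp only [h0, h1, h2] <;> split_ifs <;> omega

lemma four_le_card_filter_ne_fin_three {s : Fin 3 → α} {i j : Fin 3} (h : s i ≠ s j) :
    4 ≤ #{p : Fin 3 × Fin 3 | s p.1 ≠ s p.2} := by
  rw [card_filter_ne_fin_three]
  fin_cases i <;> fin_cases j <;> split_ifs <;> simp_all

lemma four_le_card_signChanges {ε : (Fin 3 →₀ ℕ) → α} {A : Fin 3 →₀ ℕ} (hA : ∀ i, 0 < A i)
    {i j : Fin 3} (hne : ε (A - single i 1) ≠ ε (A - single j 1)) :
    4 ≤ #(signChanges ε A) := by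
  have hsc : signChanges ε A =
      ({p : Fin 3 × Fin 3 | ε (A - single p.1 1) ≠ ε (A - single p.2 1)} : Finset _) :=
    filter_congr fun p _ => by simp [hA]
  rw [hsc]
  exact four_le_card_filter_ne_fin_three (s := fun i => ε (A - single i 1)) hne

lemma card_finsuppAntidiag_fin_three (m : ℕ) :
    #(finsuppAntidiag (univ : Finset (Fin 3)) m) = (m + 2).choose 2 := by
  rw [card_finsuppAntidiag_nat_eq_choose, card_univ, Fintype.card_fin,
    show 3 + m - 1 = m + 2 by omega, Nat.choose_symm_add]

/-- **The counting inequality `|E⁰| + 2|T⁰| ≤ d² − d`** from the proof of the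
Lebl–Peters rank theorem.  Here `ε` assigns a sign `±1` to each multi-index of
degree `d−1` in three variables; `T⁰` consists of the degree-`d` multi-indices
`A` with all components positive on which `ε(A−e·)` is not constant, and `E⁰`
of those with exactly one zero component whose two admissible signs
`ε(A−eⱼ)`, `ε(A−eₖ)` differ. -/
theorem sign_change_count_bound
    {d : ℕ} (hd : 2 ≤ d)
    (ε : (Fin 3 →₀ ℕ) → ℤ)
    (hε : ∀ a : Fin 3 →₀ ℕ, a.degree = d - 1 → ε a = 1 ∨ ε a = -1) :
    ({A : Fin 3 →₀ ℕ | A.degree = d ∧ (∃! i, A i = 0) ∧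
        ∃ j k : Fin 3, j ≠ k ∧ 0 < A j ∧ 0 < A k ∧
          ε (A - Finsupp.single j 1) ≠ ε (A - Finsupp.single k 1)}).ncard
      + 2 * ({A : Fin 3 →₀ ℕ | A.degree = d ∧ (∀ i, 0 < A i) ∧
          ∃ i j : Fin 3,
            ε (A - Finsupp.single i 1) ≠ ε (A - Finsupp.single j 1)}).ncard
      ≤ d ^ 2 - d := by
  classical
  obtain ⟨m, rfl⟩ : ∃ m, d = m + 2 := ⟨d - 2, by omega⟩
  rw [setOf_degree_eq_and, setOf_degree_eq_and, Set.ncard_coe_finset, Set.ncard_coe_finset]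
  have hεb (b : Fin 3 →₀ ℕ) (hb : b ∈ finsuppAntidiag univ m) (j : Fin 3) :
      ε (b + single j 1) = 1 ∨ ε (b + single j 1) = -1 :=
    hε _ (by simp [mem_finsuppAntidiag_univ.1 hb])
  refine Nat.le_of_mul_le_mul_left ?_ two_pos
  calc 2 * (#_ + 2 * #_) = 2 * #_ + 4 * #_ := by rw [mul_add, ← mul_assoc]; rfl
    _ ≤ ∑ A ∈ finsuppAntidiag univ (m + 2), #(signChanges ε A) :=
      mul_card_add_mul_card_le_sum ?_ (filter_subset _ _) (filter_subset _ _) ?_ ?_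
    _ = ∑ b ∈ finsuppAntidiag univ m,
          #{p : Fin 3 × Fin 3 | ε (b + single p.1 1) ≠ ε (b + single p.2 1)} :=
      sum_card_signChanges ε m
    _ ≤ #(finsuppAntidiag univ m) • 4 :=
      sum_le_card_nsmul _ _ _ fun b hb => card_filter_ne_fin_three_le_four (hεb b hb)
    _ = 2 * ((m + 2) ^ 2 - (m + 2)) := by
      have := Nat.div_mul_cancel (Nat.even_mul_pred_self (m + 2)).two_dvd
      rw [smul_eq_mul, card_finsuppAntidiag_fin_three, Nat.choose_two_right, sq,
        ← Nat.mul_sub_one]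
      omega
  · refine disjoint_filter.2 fun A _ hE hT => ?_
    obtain ⟨i, hi, -⟩ := hE.1
    exact (hT.1 i).ne' hi
  · rintro A hA
    obtain ⟨-, -, j, k, hjk, hj, hk, hne⟩ := mem_filter.1 hA
    exact two_le_card_signChanges hjk hj hk hne
  · rintro A hA
    obtain ⟨-, hpos, i, j, hne⟩ := mem_filter.1 hA
    exact four_le_card_signChanges hpos hne
end
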